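/- arXiv:1404.4702 — 4 statements merged into one kernel-verified Lean document; each statement's English description precedes it below -/
import Mathlib

section
/- Let a ≥ 1 be a real number, let n, t be integers with n ≥ 4a and 0 ≤ t ≤ n − a, let f: {0,1}^n → ℝ be an a-self-bounding function, and let x₀ ∈ {0,1}^n. Then the average of f over all points of {0,1}^n at Hamming distance exactly t from x₀ is at least (1 − t/(n − a + 1))^a · f(x₀); that is, (1/C(n,t)) · Σ_{x : d(x,x₀)=t} f(x) ≥ (1 − t/(n−a+1))^a · f(x₀). -/
/-!
Let `S s` be the sum of `f` over the Hamming sphere of radius `s` about `x₀`. Flipping a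
coordinate `i` on which `x` agrees with `x₀` lowers `f` by at most the drop
`f x - min (f (x with i ← 0)) (f (x with i ← 1))`, and the drops at `x` add up to at most `a * f x`.
Summing over the `n - s` such coordinates and double counting the edges between the two spheres
gives `(n - s - a) * S s ≤ (s + 1) * S (s + 1)`, i.e. the sphere averages satisfy
`avg (s + 1) ≥ (n - s - a) / (n - s) * avg s`. By Bernoulli's inequality the weights
`(1 - t / (n - a + 1)) ^ a` shrink at least as fast: with `b = n - t - a`, one step multiplies them
by `(b / (b + 1)) ^ a ≤ b / (b + a)`. Induction on `t` then compares `avg t` with `f x₀ ≥ 0`.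
-/

noncomputable section

/-- A function `f : {0,1}^n → ℝ` is `a`-self-bounding. -/
def SelfBounding (n : ℕ) (a : ℝ) (f : (Fin n → Bool) → ℝ) : Prop :=
  ∀ x : Fin n → Bool,
    (∀ i : Fin n,
      f x - min (f (Function.update x i false)) (f (Function.update x i true)) ≤ 1) ∧
    ∑ i : Fin n,
      (f x - min (f (Function.update x i false)) (f (Function.update x i true))) ≤ a * f x

open Finset Function

section Flip

variable {ι : Type*} [DecidableEq ι]

def flipAt (i : ι) (x : ι → Bool) : ι → Bool := update x i (!x i)

@[simp]
lemma flipAt_self (i : ι) (x : ι → Bool) : flipAt i x i = !x i := update_self ..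

lemma flipAt_involutive (i : ι) : Involutive (flipAt i) := by
  intro x
  simp [flipAt]

variable [Fintype ι]

lemma hammingDist_flipAt_of_eq {i : ι} {x x₀ : ι → Bool} (h : x i = x₀ i) :
    hammingDist (flipAt i x) x₀ = hammingDist x x₀ + 1 := by
  have hsupp : filter (fun j => flipAt i x j ≠ x₀ j) univ =
      insert i (filter (fun j => x j ≠ x₀ j) univ) := by
    ext j
    simp only [mem_filter, mem_univ, true_and, mem_insert]
    rcases eq_or_ne j i with rfl | hj
    · simp [h]
    · simp [flipAt, hj]
  rw [hammingDist, hammingDist, hsupp, card_insert_of_notMem (by simp [h])]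

def hammingSphere (x₀ : ι → Bool) (s : ℕ) : Finset (ι → Bool) := {x | hammingDist x x₀ = s}

lemma mem_hammingSphere {x₀ x : ι → Bool} {s : ℕ} :
    x ∈ hammingSphere x₀ s ↔ hammingDist x x₀ = s := by
  simp [hammingSphere]

/-- Every point of the sphere of radius `s + 1` is reached from exactly `s + 1` points of the
sphere of radius `s` by flipping one coordinate. -/
lemma sum_sum_flipAt_eq_nsmul_sum {M : Type*} [AddCommMonoid M] (x₀ : ι → Bool)
    (g : (ι → Bool) → M) (s : ℕ) :
    ∑ x ∈ hammingSphere x₀ s, ∑ i ∈ {i | x i = x₀ i}, g (flipAt i x) =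
      (s + 1) • ∑ y ∈ hammingSphere x₀ (s + 1), g y := by
  calc ∑ x ∈ hammingSphere x₀ s, ∑ i ∈ {i | x i = x₀ i}, g (flipAt i x)
      = ∑ i, ∑ x ∈ hammingSphere x₀ s with x i = x₀ i, g (flipAt i x) :=
        sum_comm' (by simp)
    _ = ∑ i, ∑ y ∈ hammingSphere x₀ (s + 1) with y i ≠ x₀ i, g y := by
        refine sum_congr rfl fun i _ => sum_equiv (flipAt_involutive i).toPerm ?_ (by simp)
        intro x
        by_cases h : x i = x₀ i
        · simp [mem_hammingSphere, hammingDist_flipAt_of_eq h, h]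
        · simp only [mem_filter, h, and_false, false_iff, not_and, not_not]
          intro _
          simpa using Bool.eq_not.mpr h
    _ = ∑ y ∈ hammingSphere x₀ (s + 1), ∑ i ∈ {i | y i ≠ x₀ i}, g y :=
        (sum_comm' (by simp)).symm
    _ = (s + 1) • ∑ y ∈ hammingSphere x₀ (s + 1), g y := by
        rw [smul_sum]
        refine sum_congr rfl fun y hy => ?_
        rw [sum_const, ← mem_hammingSphere.mp hy]
        rfl

end Flip

section CoordDrop

variable {ι : Type*} [DecidableEq ι]

def coordDrop (f : (ι → Bool) → ℝ) (x : ι → Bool) (i : ι) : ℝ :=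
  f x - min (f (update x i false)) (f (update x i true))

lemma min_le_update (f : (ι → Bool) → ℝ) (x : ι → Bool) (i : ι) (c : Bool) :
    min (f (update x i false)) (f (update x i true)) ≤ f (update x i c) := by
  cases c
  · exact min_le_left _ _
  · exact min_le_right _ _

lemma coordDrop_nonneg (f : (ι → Bool) → ℝ) (x : ι → Bool) (i : ι) : 0 ≤ coordDrop f x i := by
  have := min_le_update f x i (x i)
  rw [update_eq_self] at this
  exact sub_nonneg.mpr this

lemma sub_coordDrop_le_flipAt (f : (ι → Bool) → ℝ) (x : ι → Bool) (i : ι) :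
    f x - coordDrop f x i ≤ f (flipAt i x) := by
  rw [coordDrop, sub_sub_cancel]
  exact min_le_update f x i _

variable [Fintype ι] {a : ℝ} {f : (ι → Bool) → ℝ}

lemma nonneg_of_sum_coordDrop_le (ha : 0 < a) {x : ι → Bool}
    (hx : ∑ i, coordDrop f x i ≤ a * f x) : 0 ≤ f x :=
  nonneg_of_mul_nonneg_right ((sum_nonneg fun i _ => coordDrop_nonneg f x i).trans hx) ha

lemma mul_le_sum_flipAt {x : ι → Bool} (hx : ∑ i, coordDrop f x i ≤ a * f x) (x₀ : ι → Bool) :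
    ((Fintype.card ι : ℝ) - hammingDist x x₀ - a) * f x ≤
      ∑ i ∈ {i | x i = x₀ i}, f (flipAt i x) := by
  have hcard : (#{i | x i = x₀ i} : ℝ) = Fintype.card ι - hammingDist x x₀ :=
    eq_sub_of_add_eq (by exact_mod_cast card_filter_add_card_filter_not _)
  have hdrop : ∑ i ∈ {i | x i = x₀ i}, coordDrop f x i ≤ a * f x :=
    (sum_le_sum_of_subset_of_nonneg (subset_univ _) fun i _ _ => coordDrop_nonneg f x i).trans hx
  calc ((Fintype.card ι : ℝ) - hammingDist x x₀ - a) * f x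
      = #{i | x i = x₀ i} * f x - a * f x := by rw [hcard]; ring
    _ ≤ #{i | x i = x₀ i} * f x - ∑ i ∈ {i | x i = x₀ i}, coordDrop f x i := by linarith
    _ = ∑ i ∈ {i | x i = x₀ i}, (f x - coordDrop f x i) := by
        rw [sum_sub_distrib, sum_const, nsmul_eq_mul]
    _ ≤ ∑ i ∈ {i | x i = x₀ i}, f (flipAt i x) :=
        sum_le_sum fun i _ => sub_coordDrop_le_flipAt f x i

variable (hf : ∀ x, ∑ i, coordDrop f x i ≤ a * f x) (x₀ : ι → Bool)
include hf

lemma mul_sum_hammingSphere_le (s : ℕ) :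
    ((Fintype.card ι : ℝ) - s - a) * ∑ x ∈ hammingSphere x₀ s, f x ≤
      (s + 1) * ∑ y ∈ hammingSphere x₀ (s + 1), f y :=
  calc ((Fintype.card ι : ℝ) - s - a) * ∑ x ∈ hammingSphere x₀ s, f x
      = ∑ x ∈ hammingSphere x₀ s, ((Fintype.card ι : ℝ) - hammingDist x x₀ - a) * f x := by
        rw [mul_sum]
        exact sum_congr rfl fun x hx => by rw [mem_hammingSphere.mp hx]
    _ ≤ ∑ x ∈ hammingSphere x₀ s, ∑ i ∈ {i | x i = x₀ i}, f (flipAt i x) :=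
        sum_le_sum fun x _ => mul_le_sum_flipAt (hf x) x₀
    _ = (s + 1) * ∑ y ∈ hammingSphere x₀ (s + 1), f y := by
        rw [sum_sum_flipAt_eq_nsmul_sum, nsmul_eq_mul]
        push_cast
        rfl

lemma mul_average_hammingSphere_le {s : ℕ} (hs : s < Fintype.card ι) :
    ((Fintype.card ι : ℝ) - s - a) / (Fintype.card ι - s) *
        ((∑ x ∈ hammingSphere x₀ s, f x) / (Fintype.card ι).choose s) ≤
      (∑ y ∈ hammingSphere x₀ (s + 1), f y) / (Fintype.card ι).choose (s + 1) := by
  set n := Fintype.card ι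
  have hchoose : (n.choose (s + 1) : ℝ) * (s + 1) = n.choose s * (n - s) := by
    have h := congrArg (Nat.cast : ℕ → ℝ) (Nat.choose_succ_right_eq n s)
    push_cast [Nat.cast_sub hs.le] at h
    exact h
  have hpos : (0 : ℝ) < n.choose (s + 1) := by exact_mod_cast Nat.choose_pos hs
  have hns : (0 : ℝ) < n - s := sub_pos.mpr (by exact_mod_cast hs)
  have hpos' : (0 : ℝ) < n.choose s := by exact_mod_cast Nat.choose_pos hs.le
  rw [div_mul_div_comm, div_le_div_iff₀ (by positivity) hpos]
  calc (n - s - a) * (∑ x ∈ hammingSphere x₀ s, f x) * n.choose (s + 1)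
      ≤ (s + 1) * (∑ y ∈ hammingSphere x₀ (s + 1), f y) * n.choose (s + 1) :=
        mul_le_mul_of_nonneg_right (mul_sum_hammingSphere_le hf x₀ s) hpos.le
    _ = (∑ y ∈ hammingSphere x₀ (s + 1), f y) * ((n - s) * n.choose s) := by
        linear_combination (∑ y ∈ hammingSphere x₀ (s + 1), f y) * hchoose

end CoordDrop

lemma div_add_one_rpow_le {a b : ℝ} (ha : 1 ≤ a) (hb : 0 < b) :
    (b / (b + 1)) ^ a ≤ b / (b + a) := by
  have hbern : (b + a) / b ≤ ((b + 1) / b) ^ a := by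
    have h := one_add_mul_self_le_rpow_one_add (s := b⁻¹) (by linarith [inv_pos.mpr hb]) ha
    rwa [show 1 + a * b⁻¹ = (b + a) / b by field_simp, show 1 + b⁻¹ = (b + 1) / b by field_simp] at h
  calc (b / (b + 1)) ^ a = (((b + 1) / b) ^ a)⁻¹ := by
        rw [← Real.inv_rpow (by positivity), inv_div]
    _ ≤ ((b + a) / b)⁻¹ := inv_anti₀ (by positivity) hbern
    _ = b / (b + a) := inv_div _ _

section Average

variable {ι : Type*} [DecidableEq ι] [Fintype ι] {a : ℝ} {f : (ι → Bool) → ℝ}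

theorem rpow_mul_le_average_hammingSphere (ha : 1 ≤ a)
    (hf : ∀ x, ∑ i, coordDrop f x i ≤ a * f x) (x₀ : ι → Bool) (t : ℕ)
    (ht : (t : ℝ) ≤ Fintype.card ι - a) :
    (1 - (t : ℝ) / (Fintype.card ι - a + 1)) ^ a * f x₀ ≤
      (∑ x ∈ hammingSphere x₀ t, f x) / (Fintype.card ι).choose t := by
  induction t with
  | zero =>
    have hsphere : hammingSphere x₀ 0 = {x₀} := by ext x; simp [mem_hammingSphere]
    simp [hsphere]
  | succ t ih =>
    set n : ℝ := (Fintype.card ι : ℝ)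
    push_cast at ht ⊢
    set b := n - t - a
    have hb : 0 < b := by linarith
    have hD : 0 < n - a + 1 := by linarith
    have hts : t < Fintype.card ι := by
      have : (t : ℝ) < Fintype.card ι := by linarith
      exact_mod_cast this
    have hweight : (1 - (t + 1) / (n - a + 1)) ^ a ≤ b / (b + a) * (1 - t / (n - a + 1)) ^ a := by
      rw [show 1 - (t + 1) / (n - a + 1) = b / (b + 1) * ((b + 1) / (n - a + 1)) by
            field_simp; ring,
        show 1 - t / (n - a + 1) = (b + 1) / (n - a + 1) by field_simp; ring,
        Real.mul_rpow (by positivity) (by positivity)]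
      exact mul_le_mul_of_nonneg_right (div_add_one_rpow_le ha hb) (by positivity)
    have hfx₀ : 0 ≤ f x₀ := nonneg_of_sum_coordDrop_le (by linarith) (hf x₀)
    calc (1 - (t + 1) / (n - a + 1)) ^ a * f x₀
        ≤ b / (b + a) * (1 - t / (n - a + 1)) ^ a * f x₀ :=
          mul_le_mul_of_nonneg_right hweight hfx₀
      _ ≤ b / (b + a) * ((∑ x ∈ hammingSphere x₀ t, f x) / (Fintype.card ι).choose t) := by
          rw [mul_assoc]
          exact mul_le_mul_of_nonneg_left (ih (by linarith)) (by positivity)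
      _ ≤ _ := by
          rw [show b + a = n - t by ring]
          exact mul_average_hammingSphere_le hf x₀ hts

end Average

theorem level_average_bound_general (n t : ℕ) (a : ℝ) (ha : 1 ≤ a)
    (ht : (t : ℝ) ≤ (n : ℝ) - a)
    (f : (Fin n → Bool) → ℝ) (hf : SelfBounding n a f) (x₀ : Fin n → Bool) :
    (1 - (t : ℝ) / ((n : ℝ) - a + 1)) ^ (a : ℝ) * f x₀ ≤
      (∑ x ∈ Finset.univ.filter (fun x : Fin n → Bool => hammingDist x x₀ = t), f x) /
        (n.choose t : ℝ) := by
  have h := rpow_mul_le_average_hammingSphere ha (fun x => (hf x).2) x₀ t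
    (by rwa [Fintype.card_fin])
  rwa [Fintype.card_fin] at h

theorem level_average_bound (n t : ℕ) (a : ℝ) (ha : 1 ≤ a) (hn : 4 * a ≤ (n : ℝ))
    (ht : (t : ℝ) ≤ (n : ℝ) - a)
    (f : (Fin n → Bool) → ℝ) (hf : SelfBounding n a f) (x₀ : Fin n → Bool) :
    (1 - (t : ℝ) / ((n : ℝ) - a + 1)) ^ (a : ℝ) * f x₀ ≤
      (∑ x ∈ Finset.univ.filter (fun x : Fin n → Bool => hammingDist x x₀ = t), f x) /
        (n.choose t : ℝ) :=
  level_average_bound_general n t a ha ht f hf x₀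
end
end

section
/- Let a ≥ 1 be a real number, let n ≥ 4a be an integer, let f: {0,1}^n → ℝ be a nonnegative a-self-bounding function, let ρ ∈ [0,1], and set τ = (1 − (1−ρ)/(2(1 − (a−1)/n)))^a. Then ‖T_ρ f − f‖_1 ≤ 2(1 − τ)·‖f‖_1. -/
noncomputable section

/-- Expectation with respect to the uniform distribution on `{0,1}^n`. -/
def expect (n : ℕ) (g : (Fin n → Bool) → ℝ) : ℝ :=
  (∑ x : Fin n → Bool, g x) / 2 ^ n

/-- The noise operator `T_ρ`. -/
def noiseOp (n : ℕ) (ρ : ℝ) (f : (Fin n → Bool) → ℝ) (x : Fin n → Bool) : ℝ :=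
  ∑ y : Fin n → Bool,
    (∏ i : Fin n, if y i = x i then (1 + ρ) / 2 else (1 - ρ) / 2) * f y

/-!
Write `δ = (1 - ρ) / 2`, so that `T_ρ f x` is the average of `f` over `x` with each coordinate
flipped independently with probability `δ`. Self-bounding gives
`∑ j ∈ T, f (x with j flipped) ≥ (#T - a) f x`, and double counting the `(k+1)`-subsets of `T`
turns this, by induction on `k`, into the lower bound `C(#T, k) (1 - k / (#T - a + 1))₊ ^ a f x` for
the sum of `f` over the points obtained by flipping exactly `k` coordinates of `T`; the profile
`(1 - k / c)₊ ^ a` survives the induction step precisely by Bernoulli's inequality. The profile is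
convex in `k`, so Jensen's inequality for the binomial law of the number of flips gives
`T_ρ f ≥ τ f` pointwise. Since `T_ρ` preserves the mean, summing
`|T_ρ f - f| ≤ (T_ρ f - f) + 2 (1 - τ) f` yields the claim.
-/

open Finset hiding expect
open Function

section FlipOn

variable {ι : Type*} [DecidableEq ι]

def flipOn (x : ι → Bool) (D : Finset ι) : ι → Bool :=
  fun i => if i ∈ D then !x i else x i

@[simp]
lemma flipOn_empty (x : ι → Bool) : flipOn x ∅ = x := by
  funext i; simp [flipOn]

lemma flipOn_eq_self_iff {x : ι → Bool} {D : Finset ι} {i : ι} : flipOn x D i = x i ↔ i ∉ D := by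
  by_cases h : i ∈ D <;> simp [flipOn, h]

lemma flipOn_singleton (x : ι → Bool) (j : ι) : flipOn x {j} = update x j (!x j) := by
  funext i
  by_cases h : i = j
  · subst h; simp [flipOn]
  · simp [flipOn, h]

lemma flipOn_flipOn_singleton (x : ι → Bool) {j : ι} {D : Finset ι} (h : j ∉ D) :
    flipOn (flipOn x {j}) D = flipOn x (insert j D) := by
  funext i
  by_cases hij : i = j
  · subst hij; simp [flipOn, h]
  · by_cases hiD : i ∈ D <;> simp [flipOn, hij, hiD]

lemma flipOn_bijective [Fintype ι] (x : ι → Bool) : Bijective (flipOn x) := by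
  refine bijective_iff_has_inverse.mpr ⟨fun y => {i | y i ≠ x i}, fun D => ?_, fun y => ?_⟩
  · ext i; by_cases h : i ∈ D <;> simp [flipOn, h]
  · funext i; cases hx : x i <;> cases hy : y i <;> simp [flipOn, hx, hy]

def sphereSum (f : (ι → Bool) → ℝ) (x : ι → Bool) (T : Finset ι) (k : ℕ) : ℝ :=
  ∑ D ∈ T.powersetCard k, f (flipOn x D)

lemma succ_mul_sphereSum_succ (f : (ι → Bool) → ℝ) (x : ι → Bool) (T : Finset ι) (k : ℕ) :
    (k + 1) * sphereSum f x T (k + 1) = ∑ j ∈ T, sphereSum f (flipOn x {j}) (T.erase j) k := by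
  calc (k + 1) * sphereSum f x T (k + 1)
      = ∑ E ∈ T.powersetCard (k + 1), ∑ _j ∈ E, f (flipOn x E) := by
        rw [sphereSum, mul_sum]
        refine sum_congr rfl fun E hE => ?_
        rw [sum_const, (mem_powersetCard.mp hE).2, nsmul_eq_mul]
        push_cast; ring
    _ = ∑ j ∈ T, ∑ D ∈ (T.erase j).powersetCard k, f (flipOn x (insert j D)) := by
        rw [sum_sigma', sum_sigma']
        apply sum_bij' (fun p _ => ⟨p.2, p.1.erase p.2⟩) (fun p _ => ⟨insert p.1 p.2, p.1⟩)
        all_goals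
          rintro ⟨_, _⟩
          simp only [mem_sigma, mem_powersetCard, Sigma.mk.injEq, heq_eq_eq]
          grind [insert_erase]
    _ = ∑ j ∈ T, sphereSum f (flipOn x {j}) (T.erase j) k := by
        refine sum_congr rfl fun j _ => sum_congr rfl fun D hD => ?_
        rw [flipOn_flipOn_singleton]
        exact fun hj => notMem_erase j T ((mem_powersetCard.mp hD).1 hj)

end FlipOn

section NoiseOp

variable {n : ℕ}

lemma noiseOp_eq_sum_sphereSum (ρ : ℝ) (f : (Fin n → Bool) → ℝ) (x : Fin n → Bool) :
    noiseOp n ρ f x = ∑ k ∈ range (n + 1),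
      ((1 + ρ) / 2) ^ (n - k) * ((1 - ρ) / 2) ^ k * sphereSum f x univ k := by
  rw [noiseOp, ← (flipOn_bijective x).sum_comp, ← powerset_univ, sum_powerset, card_univ,
    Fintype.card_fin]
  refine sum_congr rfl fun k _ => ?_
  rw [sphereSum, mul_sum]
  refine sum_congr rfl fun D hD => ?_
  rw [← (mem_powersetCard.mp hD).2]
  congr 1
  simp only [flipOn_eq_self_iff, ite_not, prod_ite, filter_mem_eq_of_subset (subset_univ D),
    prod_const, filter_not, card_sdiff, card_univ, Fintype.card_fin, inter_univ, mul_comm]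

lemma sum_noiseOp (ρ : ℝ) (f : (Fin n → Bool) → ℝ) : ∑ x, noiseOp n ρ f x = ∑ x, f x := by
  simp only [noiseOp]
  rw [sum_comm]
  refine sum_congr rfl fun y _ => ?_
  rw [← sum_mul, ← Fintype.prod_sum (fun i b => if y i = b then (1 + ρ) / 2 else (1 - ρ) / 2),
    prod_eq_one fun i _ => ?_, one_mul]
  cases y i <;> simp <;> ring

lemma expect_abs_sub_le_of_mul_le {f g : (Fin n → Bool) → ℝ} {τ : ℝ} (hτ : τ ≤ 1)
    (hf0 : ∀ x, 0 ≤ f x) (hg : ∀ x, τ * f x ≤ g x) (hsum : ∑ x, g x = ∑ x, f x) :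
    expect n (fun x => |g x - f x|) ≤ 2 * (1 - τ) * expect n (fun x => |f x|) := by
  have hpoint : ∀ x, |g x - f x| ≤ (g x - f x) + 2 * (1 - τ) * f x := fun x =>
    abs_le.mpr ⟨by linarith [hg x], by nlinarith [hf0 x]⟩
  have hsum_abs : ∑ x, |g x - f x| ≤ 2 * (1 - τ) * ∑ x, |f x| :=
    calc ∑ x, |g x - f x| ≤ ∑ x, ((g x - f x) + 2 * (1 - τ) * f x) :=
          sum_le_sum fun x _ => hpoint x
      _ = 2 * (1 - τ) * ∑ x, |f x| := by
        simp only [sum_add_distrib, sum_sub_distrib, ← mul_sum, hsum, abs_of_nonneg (hf0 _)]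
        ring
  rw [expect, expect, ← mul_div_assoc]
  gcongr

end NoiseOp

section Profile

variable {a c : ℝ}

def profile (a c t : ℝ) : ℝ := (max 0 (1 - t / c)) ^ a

lemma profile_nonneg (a c t : ℝ) : 0 ≤ profile a c t :=
  Real.rpow_nonneg (le_max_left _ _) _

@[simp]
lemma profile_zero (a c : ℝ) : profile a c 0 = 1 := by
  simp [profile]

lemma profile_le_one (ha : 0 ≤ a) (hc : 0 < c) {t : ℝ} (ht : 0 ≤ t) : profile a c t ≤ 1 :=
  Real.rpow_le_one (le_max_left _ _)
    (max_le zero_le_one (sub_le_self _ (div_nonneg ht hc.le))) ha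

lemma profile_eq_zero (ha : a ≠ 0) (hc : 0 < c) {t : ℝ} (ht : c ≤ t) : profile a c t = 0 := by
  rw [profile, max_eq_left (sub_nonpos.mpr ((one_le_div hc).mpr ht)), Real.zero_rpow ha]

lemma convexOn_profile (ha : 1 ≤ a) (c : ℝ) : ConvexOn ℝ Set.univ (profile a c) := by
  refine ⟨convex_univ, fun x _ y _ p q hp hq hpq => ?_⟩
  have hbase :
      max 0 (1 - (p • x + q • y) / c) ≤ p * max 0 (1 - x / c) + q * max 0 (1 - y / c) := by
    have hsplit : 1 - (p * x + q * y) / c = p * (1 - x / c) + q * (1 - y / c) := by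
      linear_combination -hpq
    refine max_le (by positivity) ?_
    rw [smul_eq_mul, smul_eq_mul, hsplit]
    gcongr <;> exact le_max_right _ _
  calc profile a c (p • x + q • y)
      ≤ (p * max 0 (1 - x / c) + q * max 0 (1 - y / c)) ^ a :=
        Real.rpow_le_rpow (le_max_left _ _) hbase (by linarith)
    _ ≤ p • profile a c x + q • profile a c y :=
        (convexOn_rpow ha).2 (Set.mem_Ici.mpr (le_max_left _ _))
          (Set.mem_Ici.mpr (le_max_left _ _)) hp hq hpq

lemma profile_succ_le (ha : 1 ≤ a) {q k : ℝ} (hk : 0 ≤ k) (hkq : k < q) :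
    (q + a) * profile a (q + 1) (k + 1) ≤ q * profile a q k := by
  have hq : 0 < q := hk.trans_lt hkq
  have hbase : 0 ≤ 1 - k / q := sub_nonneg.mpr ((div_le_one hq).mpr hkq.le)
  have hsplit : profile a (q + 1) (k + 1) = profile a q k * (q / (q + 1)) ^ a := by
    have h : 1 - (k + 1) / (q + 1) = (1 - k / q) * (q / (q + 1)) := by field_simp; ring
    rw [profile, profile, h, max_eq_right (by positivity), max_eq_right hbase,
      Real.mul_rpow hbase (by positivity)]
  have hbernoulli : 1 + a * (1 / q) ≤ (1 + 1 / q) ^ a :=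
    one_add_mul_self_le_rpow_one_add (by have := one_div_pos.mpr hq; linarith) ha
  have hcancel : (1 + 1 / q) ^ a * (q / (q + 1)) ^ a = 1 := by
    rw [← Real.mul_rpow (by positivity) (by positivity),
      show (1 + 1 / q) * (q / (q + 1)) = 1 by field_simp, Real.one_rpow]
  have hshrink : (q + a) * (q / (q + 1)) ^ a ≤ q :=
    calc (q + a) * (q / (q + 1)) ^ a = q * ((1 + a * (1 / q)) * (q / (q + 1)) ^ a) := by
          field_simp
      _ ≤ q * ((1 + 1 / q) ^ a * (q / (q + 1)) ^ a) := by gcongr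
      _ = q := by rw [hcancel, mul_one]
  calc (q + a) * profile a (q + 1) (k + 1) = profile a q k * ((q + a) * (q / (q + 1)) ^ a) := by
        rw [hsplit]; ring
    _ ≤ profile a q k * q := mul_le_mul_of_nonneg_left hshrink (profile_nonneg _ _ _)
    _ = q * profile a q k := mul_comm _ _

lemma succ_mul_choose_mul_profile_le (ha : 1 ≤ a) {m k : ℕ} (hk : (k : ℝ) < m - a + 1) :
    (k + 1) * ((m + 1).choose (k + 1) * profile a ((m + 1 : ℕ) - a + 1) (k + 1 : ℕ)) ≤
      ((m + 1 : ℕ) - a) * (m.choose k * profile a (m - a + 1) k) := by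
  have hchoose : ((k : ℝ) + 1) * (m + 1).choose (k + 1) = (m + 1) * m.choose k := by
    rw [mul_comm]; exact_mod_cast (Nat.add_one_mul_choose_eq m k).symm
  have hstep := profile_succ_le ha k.cast_nonneg hk
  calc (k + 1) * ((m + 1).choose (k + 1) * profile a ((m + 1 : ℕ) - a + 1) (k + 1 : ℕ))
      = m.choose k * ((m - a + 1 + a) * profile a (m - a + 1 + 1) (k + 1)) := by
        rw [← mul_assoc, hchoose]; push_cast; ring_nf
    _ ≤ m.choose k * ((m - a + 1) * profile a (m - a + 1) k) := by gcongr
    _ = ((m + 1 : ℕ) - a) * (m.choose k * profile a (m - a + 1) k) := by push_cast; ring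

lemma profile_le_sum_bernstein (ha : 1 ≤ a) (c : ℝ) (n : ℕ) {δ : ℝ} (hδ0 : 0 ≤ δ)
    (hδ1 : δ ≤ 1) :
    profile a c (n * δ) ≤
      ∑ k ∈ range (n + 1), (bernsteinPolynomial ℝ n k).eval δ * profile a c k := by
  have hw0 : ∀ k ∈ range (n + 1), 0 ≤ (bernsteinPolynomial ℝ n k).eval δ := fun k _ => by
    have : 0 ≤ 1 - δ := sub_nonneg.mpr hδ1
    simp only [bernsteinPolynomial, Polynomial.eval_mul, Polynomial.eval_pow, Polynomial.eval_sub,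
      Polynomial.eval_one, Polynomial.eval_X, Polynomial.eval_natCast]
    positivity
  have hw1 : ∑ k ∈ range (n + 1), (bernsteinPolynomial ℝ n k).eval δ = 1 := by
    simpa [Polynomial.eval_finsetSum] using
      congrArg (Polynomial.eval δ) (bernsteinPolynomial.sum ℝ n)
  have hmean : ∑ k ∈ range (n + 1), (bernsteinPolynomial ℝ n k).eval δ * k = n * δ := by
    simpa [Polynomial.eval_finsetSum, mul_comm] using
      congrArg (Polynomial.eval δ) (bernsteinPolynomial.sum_smul ℝ n)
  simpa [hmean] using (convexOn_profile ha c).map_sum_le hw0 hw1 fun k _ => Set.mem_univ (k : ℝ)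

end Profile

lemma min_update_le {ι β : Type*} [DecidableEq ι] [LinearOrder β] (f : (ι → Bool) → β)
    (x : ι → Bool) (j : ι) (b : Bool) :
    min (f (update x j false)) (f (update x j true)) ≤ f (update x j b) := by
  cases b
  exacts [min_le_left _ _, min_le_right _ _]

namespace SelfBounding

variable {n : ℕ} {a : ℝ} {f : (Fin n → Bool) → ℝ}

lemma card_sub_mul_le_sum_flipOn_singleton (hf : SelfBounding n a f) (x : Fin n → Bool)
    (T : Finset (Fin n)) : (#T - a) * f x ≤ ∑ j ∈ T, f (flipOn x {j}) := by
  set dec := fun j => f x - min (f (update x j false)) (f (update x j true))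
  have hdec_nonneg : ∀ j, 0 ≤ dec j := fun j => by
    simpa [dec, update_eq_self] using min_update_le f x j (x j)
  have hdec_sum : ∑ j ∈ T, dec j ≤ a * f x :=
    (sum_le_sum_of_subset_of_nonneg (subset_univ T) fun j _ _ => hdec_nonneg j).trans (hf x).2
  calc (#T - a) * f x ≤ ∑ j ∈ T, (f x - dec j) := by
        rw [sum_sub_distrib, sum_const, nsmul_eq_mul]; linarith
    _ ≤ ∑ j ∈ T, f (flipOn x {j}) := sum_le_sum fun j _ => by
        simpa [dec, flipOn_singleton] using min_update_le f x j (!x j)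

lemma choose_mul_profile_le_sphereSum (ha : 1 ≤ a) (hf0 : ∀ x, 0 ≤ f x)
    (hf : SelfBounding n a f) (k : ℕ) :
    ∀ (T : Finset (Fin n)) (x : Fin n → Bool), 0 < (#T : ℝ) - a + 1 →
      ((#T).choose k : ℝ) * profile a (#T - a + 1) k * f x ≤ sphereSum f x T k := by
  induction k with
  | zero => intro T x _; simp [sphereSum]
  | succ k ih =>
    intro T x hc
    rcases le_or_gt ((#T : ℝ) - a + 1) (k + 1) with hk | hk
    · rw [Nat.cast_succ, profile_eq_zero (by linarith) hc hk, mul_zero, zero_mul]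
      exact sum_nonneg fun D _ => hf0 _
    obtain ⟨m, hm⟩ : ∃ m, #T = m + 1 :=
      Nat.exists_eq_add_one.mpr (by exact_mod_cast (show (0 : ℝ) < #T by linarith))
    have hkq : (k : ℝ) < m - a + 1 := by rw [hm] at hk; push_cast at hk; linarith
    have hstep := succ_mul_choose_mul_profile_le ha hkq
    rw [← hm] at hstep
    have hih : ∀ j ∈ T, (m.choose k : ℝ) * profile a (m - a + 1) k * f (flipOn x {j}) ≤
        sphereSum f (flipOn x {j}) (T.erase j) k := fun j hj => by
      have herase : #(T.erase j) = m := by rw [card_erase_of_mem hj, hm]; rfl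
      have := ih (T.erase j) (flipOn x {j}) (by rw [herase]; linarith)
      rwa [herase] at this
    refine le_of_mul_le_mul_left ?_ (by positivity : (0 : ℝ) < k + 1)
    calc ((k : ℝ) + 1) * (((#T).choose (k + 1) : ℝ) * profile a (#T - a + 1) ↑(k + 1) * f x)
        = (k + 1) * ((#T).choose (k + 1) * profile a (#T - a + 1) ↑(k + 1)) * f x := by ring
      _ ≤ (#T - a) * (m.choose k * profile a (m - a + 1) k) * f x := by
          gcongr; exact hf0 x
      _ = m.choose k * profile a (m - a + 1) k * ((#T - a) * f x) := by ring
      _ ≤ m.choose k * profile a (m - a + 1) k * ∑ j ∈ T, f (flipOn x {j}) := by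
          gcongr
          · exact mul_nonneg (Nat.cast_nonneg _) (profile_nonneg _ _ _)
          · exact hf.card_sub_mul_le_sum_flipOn_singleton x T
      _ ≤ ∑ j ∈ T, sphereSum f (flipOn x {j}) (T.erase j) k := by
          rw [mul_sum]; exact sum_le_sum hih
      _ = (k + 1) * sphereSum f x T (k + 1) := (succ_mul_sphereSum_succ f x T k).symm

lemma profile_mul_le_noiseOp {ρ : ℝ} (ha : 1 ≤ a) (hf0 : ∀ x, 0 ≤ f x)
    (hf : SelfBounding n a f) (hρ0 : 0 ≤ ρ) (hρ1 : ρ ≤ 1) (hc : 0 < (n : ℝ) - a + 1)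
    (x : Fin n → Bool) :
    profile a (n - a + 1) (n * ((1 - ρ) / 2)) * f x ≤ noiseOp n ρ f x := by
  have hweight : ∀ k, (bernsteinPolynomial ℝ n k).eval ((1 - ρ) / 2) =
      ((1 + ρ) / 2) ^ (n - k) * ((1 - ρ) / 2) ^ k * n.choose k := fun k => by
    simp only [bernsteinPolynomial, Polynomial.eval_mul, Polynomial.eval_pow, Polynomial.eval_sub,
      Polynomial.eval_one, Polynomial.eval_X, Polynomial.eval_natCast]
    ring
  have hsphere : ∀ k, (n.choose k : ℝ) * profile a (n - a + 1) k * f x ≤ sphereSum f x univ k :=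
    fun k => by simpa using hf.choose_mul_profile_le_sphereSum ha hf0 k univ x (by simpa using hc)
  rw [noiseOp_eq_sum_sphereSum]
  calc profile a (n - a + 1) (n * ((1 - ρ) / 2)) * f x
      ≤ (∑ k ∈ range (n + 1),
          (bernsteinPolynomial ℝ n k).eval ((1 - ρ) / 2) * profile a (n - a + 1) k) * f x :=
        mul_le_mul_of_nonneg_right
          (profile_le_sum_bernstein ha _ n (by linarith) (by linarith)) (hf0 x)
    _ = ∑ k ∈ range (n + 1), ((1 + ρ) / 2) ^ (n - k) * ((1 - ρ) / 2) ^ k *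
          ((n.choose k : ℝ) * profile a (n - a + 1) k * f x) := by
        rw [sum_mul]
        exact sum_congr rfl fun k _ => by rw [hweight]; ring
    _ ≤ _ := sum_le_sum fun k _ => by
        have : 0 ≤ 1 + ρ := by linarith
        have : 0 ≤ 1 - ρ := by linarith
        gcongr
        exact hsphere k

end SelfBounding

theorem noiseOp_l1_close (n : ℕ) (a : ℝ) (ha : 1 ≤ a) (hn : 4 * a ≤ (n : ℝ))
    (f : (Fin n → Bool) → ℝ) (hf0 : ∀ x, 0 ≤ f x) (hf : SelfBounding n a f)
    (ρ : ℝ) (hρ : ρ ∈ Set.Icc (0 : ℝ) 1)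
    (τ : ℝ) (hτ : τ = (1 - (1 - ρ) / (2 * (1 - (a - 1) / (n : ℝ)))) ^ (a : ℝ)) :
    expect n (fun x => |noiseOp n ρ f x - f x|) ≤ 2 * (1 - τ) * expect n (fun x => |f x|) := by
  obtain ⟨hρ0, hρ1⟩ := hρ
  have hn0 : (0 : ℝ) < n := by linarith
  have hc : 0 < (n : ℝ) - a + 1 := by linarith
  have hτ_profile : τ = profile a (n - a + 1) (n * ((1 - ρ) / 2)) := by
    have hbase : 1 - (1 - ρ) / (2 * (1 - (a - 1) / n)) = 1 - n * ((1 - ρ) / 2) / (n - a + 1) := by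
      rw [show 1 - (a - 1) / n = (n - a + 1) / n by field_simp; ring]
      field_simp
    have hnonneg : 0 ≤ 1 - n * ((1 - ρ) / 2) / (n - a + 1) := by
      rw [sub_nonneg, div_le_one hc]; nlinarith
    rw [hτ, hbase, profile, max_eq_right hnonneg]
  refine expect_abs_sub_le_of_mul_le ?_ hf0 (fun x => ?_) (sum_noiseOp ρ f)
  · rw [hτ_profile]
    exact profile_le_one (by linarith) hc (mul_nonneg hn0.le (by linarith))
  · rw [hτ_profile]
    exact hf.profile_mul_le_noiseOp ha hf0 hρ0 hρ1 hc x
end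
end

section
/- Let f: {0,1}^n → ℝ, let κ ∈ (1,2), let α > 0, and let d ≥ 1 be an integer. Let I = {i ∈ [n] : Inf^κ_i(f) ≥ α}. Then Σ_{S ⊆ [n], S ⊄ I, |S| ≤ d} f̂(S)² ≤ (κ−1)^{1−d} · α^{2/κ − 1} · Inf^κ(f). -/
noncomputable section

/-- The parity function `χ_S(x) = (-1)^{Σ_{i∈S} x_i}`. -/
def parity (n : ℕ) (S : Finset (Fin n)) (x : Fin n → Bool) : ℝ :=
  (-1 : ℝ) ^ (S.filter (fun i => x i = true)).card

/-- Fourier coefficient `f̂(S) = E[f ⬝ χ_S]`. -/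
def fourierHat (n : ℕ) (f : (Fin n → Bool) → ℝ) (S : Finset (Fin n)) : ℝ :=
  expect n (fun x => f x * parity n S x)

/-- Discrete derivative `∂ᵢ f(x) = (f(x_{i←1}) − f(x_{i←0}))/2`. -/
def dderiv (n : ℕ) (f : (Fin n → Bool) → ℝ) (i : Fin n) (x : Fin n → Bool) : ℝ :=
  (f (Function.update x i true) - f (Function.update x i false)) / 2

/-- The `ℓ_κ^κ`-influence of variable `i`: `Inf^κ_i(f) = E[|∂ᵢ f|^κ]`. -/
def influence (n : ℕ) (κ : ℝ) (f : (Fin n → Bool) → ℝ) (i : Fin n) : ℝ :=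
  expect n (fun x => |dderiv n f i x| ^ κ)

/-!
For `i ∈ S` one has `f̂(S) = -(∂ᵢf)^(S \ {i})`, and `(κ-1)^{|S|-1} ≥ (κ-1)^{d-1}` when `|S| ≤ d`
because `κ - 1 < 1`. So the Fourier weight of `f` on the sets `S ∋ i` of size at most `d` is at most
`(κ-1)^{1-d} Σ_T (κ-1)^{|T|} (∂ᵢf)^(T)²`, which `(κ, 2)`-hypercontractivity bounds by
`(κ-1)^{1-d} Inf^κ_i(f)^{2/κ}`. For `i ∉ I` this is at most `(κ-1)^{1-d} α^{2/κ-1} Inf^κ_i(f)`,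
as `Inf^κ_i(f) < α` and `2/κ ≥ 1`; every `S ⊄ I` contains some `i ∉ I`, so summing over these `i`
gives the bound.

Hypercontractivity is proved by induction on `n`, splitting off the first coordinate: Bonami's
two-point inequality `(a² + (κ-1)b²)^{κ/2} ≤ (|a+b|^κ + |a-b|^κ)/2` and the reverse Minkowski
inequality in `L^{κ/2}` (note `κ/2 < 1`) carry the bound from `n` to `n + 1`.
-/

open Finset hiding expect
open Function

namespace Real

lemma two_le_rpow_add_rpow {u v γ : ℝ} (hu : 0 < u) (hv : 0 < v) (huv : u * v ≤ 1)
    (hγ : γ ≤ 0) : 2 ≤ u ^ γ + v ^ γ := by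
  have hprod : 1 ≤ u ^ γ * v ^ γ := by
    rw [← mul_rpow hu.le hv.le]
    exact one_le_rpow_of_pos_of_le_one_of_nonpos (mul_pos hu hv) huv hγ
  nlinarith [sq_nonneg (u ^ γ - v ^ γ), rpow_pos_of_pos hu γ, rpow_pos_of_pos hv γ]

lemma hasDerivAt_one_add_rpow {x : ℝ} (hx : -1 < x) (β : ℝ) :
    HasDerivAt (fun t => (1 + t) ^ β) (β * (1 + x) ^ (β - 1)) x := by
  simpa using ((hasDerivAt_id' x).const_add 1).rpow_const (p := β) (Or.inl (by linarith))

lemma hasDerivAt_one_sub_rpow {x : ℝ} (hx : x < 1) (β : ℝ) :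
    HasDerivAt (fun t => (1 - t) ^ β) (-(β * (1 - x) ^ (β - 1))) x := by
  simpa using ((hasDerivAt_id' x).const_sub 1).rpow_const (p := β) (Or.inl (by linarith))

lemma two_mul_mul_le_one_add_rpow_sub_one_sub_rpow {β t : ℝ} (hβ₀ : 0 < β) (hβ₁ : β < 1)
    (ht : t ∈ Set.Icc (0 : ℝ) 1) : 2 * β * t ≤ (1 + t) ^ β - (1 - t) ^ β := by
  have hmono : MonotoneOn (fun t => (1 + t) ^ β - (1 - t) ^ β - 2 * β * t) (Set.Icc 0 1) := by
    refine monotoneOn_of_hasDerivWithinAt_nonneg (convex_Icc 0 1)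
      (by fun_prop (disch := positivity)) (fun x hx => ?_) (fun x hx => ?_)
      (f' := fun x => β * ((1 + x) ^ (β - 1) + (1 - x) ^ (β - 1) - 2))
      <;> rw [interior_Icc] at hx
    · exact (((hasDerivAt_one_add_rpow (by linarith [hx.1]) β).sub
        (hasDerivAt_one_sub_rpow hx.2 β)).sub ((hasDerivAt_id' x).const_mul (2 * β))
        |>.congr_deriv (by ring)).hasDerivWithinAt
    · have := two_le_rpow_add_rpow (by linarith [hx.1] : 0 < 1 + x)
        (by linarith [hx.2] : 0 < 1 - x) (by nlinarith [sq_nonneg x]) (by linarith : β - 1 ≤ 0)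
      exact mul_nonneg hβ₀.le (by linarith)
  have := hmono (Set.left_mem_Icc.2 zero_le_one) ht ht.1
  norm_num at this
  linarith

lemma two_add_mul_sq_le_one_add_rpow_add_one_sub_rpow {κ t : ℝ} (hκ₁ : 1 < κ) (hκ₂ : κ < 2)
    (ht : t ∈ Set.Icc (0 : ℝ) 1) : 2 + κ * (κ - 1) * t ^ 2 ≤ (1 + t) ^ κ + (1 - t) ^ κ := by
  have hmono : MonotoneOn (fun t => (1 + t) ^ κ + (1 - t) ^ κ - κ * (κ - 1) * t ^ 2)
      (Set.Icc 0 1) := by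
    refine monotoneOn_of_hasDerivWithinAt_nonneg (convex_Icc 0 1)
      (by fun_prop (disch := positivity)) (fun x hx => ?_) (fun x hx => ?_)
      (f' := fun x => κ * ((1 + x) ^ (κ - 1) - (1 - x) ^ (κ - 1) - 2 * (κ - 1) * x))
      <;> rw [interior_Icc] at hx
    · exact (((hasDerivAt_one_add_rpow (by linarith [hx.1]) κ).add
        (hasDerivAt_one_sub_rpow hx.2 κ)).sub ((hasDerivAt_pow 2 x).const_mul (κ * (κ - 1)))
        |>.congr_deriv (by ring)).hasDerivWithinAt
    · have := two_mul_mul_le_one_add_rpow_sub_one_sub_rpow (by linarith : 0 < κ - 1)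
        (by linarith : κ - 1 < 1) (Set.Ioo_subset_Icc_self hx)
      exact mul_nonneg (by linarith) (by linarith)
  have := hmono (Set.left_mem_Icc.2 zero_le_one) ht ht.1
  norm_num at this
  linarith

lemma sq_rpow_div_two (x p : ℝ) : (x ^ 2) ^ (p / 2) = |x| ^ p := by
  rw [rpow_div_two_eq_sqrt p (sq_nonneg x), sqrt_sq_eq_abs]

lemma one_add_mul_sq_rpow_le {κ t : ℝ} (hκ₁ : 1 < κ) (hκ₂ : κ < 2) (ht : |t| ≤ 1) :
    (1 + (κ - 1) * t ^ 2) ^ (κ / 2) ≤ ((1 + t) ^ κ + (1 - t) ^ κ) / 2 := by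
  have hbernoulli : (1 + (κ - 1) * t ^ 2) ^ (κ / 2) ≤ 1 + κ / 2 * ((κ - 1) * t ^ 2) :=
    rpow_one_add_le_one_add_mul_self (by nlinarith [sq_nonneg t]) (by linarith) (by linarith)
  have hsymm : (1 + |t|) ^ κ + (1 - |t|) ^ κ = (1 + t) ^ κ + (1 - t) ^ κ := by
    rcases abs_choice t with h | h <;> rw [h]
    ring_nf
  have := two_add_mul_sq_le_one_add_rpow_add_one_sub_rpow hκ₁ hκ₂ ⟨abs_nonneg t, ht⟩
  rw [sq_abs, hsymm] at this
  linarith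

lemma sq_add_mul_sq_rpow_le_of_abs_le {κ a b : ℝ} (hκ₁ : 1 < κ) (hκ₂ : κ < 2) (hba : |b| ≤ |a|) :
    (a ^ 2 + (κ - 1) * b ^ 2) ^ (κ / 2) ≤ (|a + b| ^ κ + |a - b| ^ κ) / 2 := by
  rcases eq_or_ne a 0 with rfl | ha
  · obtain rfl : b = 0 := abs_nonpos_iff.1 (by simpa using hba)
    simp [zero_rpow (by linarith : κ / 2 ≠ 0), zero_rpow (by linarith : κ ≠ 0)]
  set t := b / a
  have ht : |t| ≤ 1 := by rw [abs_div]; exact div_le_one_of_le₀ hba (abs_nonneg a)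
  have hb : b = a * t := (mul_div_cancel₀ b ha).symm
  have h₁ : 0 ≤ 1 + t := by linarith [neg_abs_le t]
  have h₂ : 0 ≤ 1 - t := by linarith [le_abs_self t]
  have hscale : ∀ s, 0 ≤ s → |a * s| ^ κ = |a| ^ κ * s ^ κ := fun s hs => by
    rw [abs_mul, abs_of_nonneg hs, mul_rpow (abs_nonneg a) hs]
  calc (a ^ 2 + (κ - 1) * b ^ 2) ^ (κ / 2)
      = |a| ^ κ * (1 + (κ - 1) * t ^ 2) ^ (κ / 2) := by
        rw [hb, show a ^ 2 + (κ - 1) * (a * t) ^ 2 = a ^ 2 * (1 + (κ - 1) * t ^ 2) by ring,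
          mul_rpow (sq_nonneg a) (by nlinarith [sq_nonneg t]), sq_rpow_div_two]
    _ ≤ |a| ^ κ * (((1 + t) ^ κ + (1 - t) ^ κ) / 2) := by
        gcongr
        exact one_add_mul_sq_rpow_le hκ₁ hκ₂ ht
    _ = (|a + b| ^ κ + |a - b| ^ κ) / 2 := by
        rw [hb, show a + a * t = a * (1 + t) by ring, show a - a * t = a * (1 - t) by ring,
          hscale _ h₁, hscale _ h₂]
        ring

/-- Bonami's two-point inequality. -/
lemma sq_add_mul_sq_rpow_le {κ : ℝ} (hκ₁ : 1 < κ) (hκ₂ : κ < 2) (a b : ℝ) :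
    (a ^ 2 + (κ - 1) * b ^ 2) ^ (κ / 2) ≤ (|a + b| ^ κ + |a - b| ^ κ) / 2 := by
  rcases le_total |b| |a| with hba | hab
  · exact sq_add_mul_sq_rpow_le_of_abs_le hκ₁ hκ₂ hba
  · have hsq : a ^ 2 ≤ b ^ 2 := sq_le_sq.2 hab
    calc (a ^ 2 + (κ - 1) * b ^ 2) ^ (κ / 2) ≤ (b ^ 2 + (κ - 1) * a ^ 2) ^ (κ / 2) :=
          rpow_le_rpow (by nlinarith [sq_nonneg b]) (by nlinarith) (by linarith)
      _ ≤ (|b + a| ^ κ + |b - a| ^ κ) / 2 := sq_add_mul_sq_rpow_le_of_abs_le hκ₁ hκ₂ hab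
      _ = (|a + b| ^ κ + |a - b| ^ κ) / 2 := by rw [add_comm b, abs_sub_comm]

lemma rpow_le_rpow_sub_one_mul {x a q : ℝ} (hx : 0 ≤ x) (hxa : x ≤ a) (hq : 1 ≤ q) :
    x ^ q ≤ a ^ (q - 1) * x := by
  calc x ^ q = x ^ (q - 1) * x := by
        rw [← rpow_add_one' hx (by linarith), sub_add_cancel]
    _ ≤ a ^ (q - 1) * x := by gcongr

section Minkowski

variable {ι : Type*} (s : Finset ι) {f g : ι → ℝ} {p : ℝ}

lemma sum_rpow_mul_rpow_le (hp₀ : 0 < p) (hp₁ : p < 1) (hf : ∀ i ∈ s, 0 ≤ f i)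
    (hg : ∀ i ∈ s, 0 ≤ g i) :
    ∑ i ∈ s, f i ^ p * g i ^ (1 - p) ≤ (∑ i ∈ s, f i) ^ p * (∑ i ∈ s, g i) ^ (1 - p) := by
  have hpq : (1 / p).HolderConjugate (1 / (1 - p)) := by
    rw [holderConjugate_iff]
    exact ⟨one_lt_one_div hp₀ hp₁, by rw [one_div, one_div, inv_inv, inv_inv]; ring⟩
  have hroot : ∀ {q : ℝ}, 0 < q → ∀ {x : ℝ}, 0 ≤ x → (x ^ q) ^ (1 / q) = x := fun hq x hx => by
    rw [← rpow_mul hx, mul_one_div_cancel hq.ne', rpow_one]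
  convert inner_le_Lp_mul_Lq_of_nonneg s hpq (fun i hi => rpow_nonneg (hf i hi) p)
    (fun i hi => rpow_nonneg (hg i hi) (1 - p)) using 2
  · rw [sum_congr rfl fun i hi => hroot hp₀ (hf i hi), one_div_one_div]
  · rw [sum_congr rfl fun i hi => hroot (by linarith) (hg i hi), one_div_one_div]

lemma sum_rpow_le_sum_mul_rpow_sub_one_rpow_mul (hp₀ : 0 < p) (hp₁ : p < 1) (hf : ∀ i ∈ s, 0 ≤ f i)
    (hfg : ∀ i ∈ s, f i ≤ g i) :
    ∑ i ∈ s, f i ^ p ≤ (∑ i ∈ s, f i * g i ^ (p - 1)) ^ p * (∑ i ∈ s, g i ^ p) ^ (1 - p) := by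
  have hg : ∀ i ∈ s, 0 ≤ g i := fun i hi => (hf i hi).trans (hfg i hi)
  refine le_trans (sum_le_sum fun i hi => le_of_eq ?_)
    (sum_rpow_mul_rpow_le s hp₀ hp₁ (fun i hi => mul_nonneg (hf i hi) (rpow_nonneg (hg i hi) _))
      (fun i hi => rpow_nonneg (hg i hi) p))
  rcases (hg i hi).eq_or_lt with hgi | hgi
  · have hfi : f i = 0 := le_antisymm (hgi ▸ hfg i hi) (hf i hi)
    rw [hfi, ← hgi, zero_rpow hp₀.ne', zero_mul, zero_rpow hp₀.ne', zero_mul]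
  · rw [mul_rpow (hf i hi) (rpow_nonneg hgi.le _), ← rpow_mul hgi.le, ← rpow_mul hgi.le,
      mul_assoc, ← rpow_add hgi, show (p - 1) * p + p * (1 - p) = 0 by ring, rpow_zero, mul_one]

lemma Lp_add_Lp_le_Lp_add (hp₀ : 0 < p) (hp₁ : p < 1) (hf : ∀ i ∈ s, 0 ≤ f i)
    (hg : ∀ i ∈ s, 0 ≤ g i) :
    (∑ i ∈ s, f i ^ p) ^ (1 / p) + (∑ i ∈ s, g i ^ p) ^ (1 / p) ≤
      (∑ i ∈ s, (f i + g i) ^ p) ^ (1 / p) := by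
  set h := fun i => f i + g i
  set S := ∑ i ∈ s, h i ^ p
  have hh : ∀ i ∈ s, 0 ≤ h i := fun i hi => add_nonneg (hf i hi) (hg i hi)
  have hS : 0 ≤ S := sum_nonneg fun i hi => rpow_nonneg (hh i hi) p
  have hpart : ∀ u : ι → ℝ, (∀ i ∈ s, 0 ≤ u i) → (∀ i ∈ s, u i ≤ h i) →
      (∑ i ∈ s, u i ^ p) ^ (1 / p) ≤ (∑ i ∈ s, u i * h i ^ (p - 1)) * S ^ ((1 - p) / p) := by
    intro u hu huh
    have hA : 0 ≤ ∑ i ∈ s, u i * h i ^ (p - 1) :=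
      sum_nonneg fun i hi => mul_nonneg (hu i hi) (rpow_nonneg (hh i hi) _)
    calc (∑ i ∈ s, u i ^ p) ^ (1 / p)
        ≤ ((∑ i ∈ s, u i * h i ^ (p - 1)) ^ p * S ^ (1 - p)) ^ (1 / p) :=
          rpow_le_rpow (sum_nonneg fun i hi => rpow_nonneg (hu i hi) p)
            (sum_rpow_le_sum_mul_rpow_sub_one_rpow_mul s hp₀ hp₁ hu huh) (by positivity)
      _ = (∑ i ∈ s, u i * h i ^ (p - 1)) * S ^ ((1 - p) / p) := by
          rw [mul_rpow (rpow_nonneg hA _) (rpow_nonneg hS _), ← rpow_mul hA, ← rpow_mul hS,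
            mul_one_div_cancel hp₀.ne', rpow_one, mul_one_div]
  have hsplit : (∑ i ∈ s, f i * h i ^ (p - 1)) + (∑ i ∈ s, g i * h i ^ (p - 1)) = S := by
    rw [← sum_add_distrib]
    refine sum_congr rfl fun i hi => ?_
    rw [← add_mul, ← rpow_one_add' (hh i hi) (by simpa using hp₀.ne'), add_sub_cancel]
  calc _ ≤ (∑ i ∈ s, f i * h i ^ (p - 1)) * S ^ ((1 - p) / p)
        + (∑ i ∈ s, g i * h i ^ (p - 1)) * S ^ ((1 - p) / p) :=
        add_le_add (hpart f hf fun i hi => le_add_of_nonneg_right (hg i hi))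
          (hpart g hg fun i hi => le_add_of_nonneg_left (hf i hi))
    _ = S ^ (1 / p) := by
        rw [← add_mul, hsplit,
          ← rpow_one_add' hS (add_pos one_pos (div_pos (sub_pos.2 hp₁) hp₀)).ne']
        congr 1
        field_simp
        ring

end Minkowski

end Real

namespace Finset

lemma sum_le_sum_sum_filter_mem {α M : Type*} [DecidableEq α] [AddCommMonoid M]
    [PartialOrder M] [IsOrderedAddMonoid M] {A : Finset (Finset α)} {J : Finset α}
    {c : Finset α → M} (hc : ∀ S ∈ A, 0 ≤ c S) (hA : ∀ S ∈ A, ∃ i ∈ J, i ∈ S) :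
    ∑ S ∈ A, c S ≤ ∑ i ∈ J, ∑ S ∈ A with i ∈ S, c S := by
  calc ∑ S ∈ A, c S ≤ ∑ S ∈ A, ∑ i ∈ J with i ∈ S, c S := sum_le_sum fun S hS => by
        obtain ⟨i, hiJ, hiS⟩ := hA S hS
        exact single_le_sum (f := fun _ => c S) (fun _ _ => hc S hS) (mem_filter.2 ⟨hiJ, hiS⟩)
    _ = ∑ i ∈ J, ∑ S ∈ A with i ∈ S, c S := by
        simp only [sum_filter]
        exact sum_comm

lemma sum_filter_mem_eq_sum_filter_not_mem_insert {α M : Type*} [Fintype α]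
    [DecidableEq α] [AddCommMonoid M] (i : α) (F : Finset α → M) :
    ∑ S with i ∈ S, F S = ∑ T with i ∉ T, F (insert i T) := by
  refine sum_nbij' (fun S => S.erase i) (insert i) ?_ ?_ ?_ ?_ ?_ <;> intro S hS <;>
    simp_all [insert_erase]

end Finset

section BooleanCube

variable {n : ℕ}

lemma expect_nonneg {g : (Fin n → Bool) → ℝ} (hg : ∀ x, 0 ≤ g x) : 0 ≤ expect n g :=
  div_nonneg (sum_nonneg fun x _ => hg x) (by positivity)

lemma expect_mono {g h : (Fin n → Bool) → ℝ} (hgh : ∀ x, g x ≤ h x) :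
    expect n g ≤ expect n h :=
  div_le_div_of_nonneg_right (sum_le_sum fun x _ => hgh x) (by positivity)

lemma expect_const_mul (c : ℝ) (g : (Fin n → Bool) → ℝ) :
    expect n (fun x => c * g x) = c * expect n g := by
  rw [expect, expect, ← mul_sum, mul_div_assoc]

lemma expect_eq_expect_update_avg (i : Fin n) (g : (Fin n → Bool) → ℝ) :
    expect n g = expect n (fun x => (g (update x i true) + g (update x i false)) / 2) := by
  let flip : Equiv.Perm (Fin n → Bool) :=
    Involutive.toPerm (fun x => update x i (!x i)) fun x => by
      simp only [update_self, Bool.not_not, update_idem, update_eq_self]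
  have hpair : ∀ x, g (update x i true) + g (update x i false) = g x + g (flip x) := by
    intro x
    change _ = g x + g (update x i (!x i))
    cases hx : x i
    · rw [Bool.not_false, ← hx, update_eq_self, add_comm]
    · rw [Bool.not_true, ← hx, update_eq_self]
  rw [expect, expect, ← sum_div, sum_congr rfl fun x _ => hpair x, sum_add_distrib,
    Equiv.sum_comp flip g]
  ring

def headAvg (g : (Fin (n + 1) → Bool) → ℝ) (y : Fin n → Bool) : ℝ :=
  (g (Fin.cons false y) + g (Fin.cons true y)) / 2

def headDiff (g : (Fin (n + 1) → Bool) → ℝ) (y : Fin n → Bool) : ℝ :=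
  (g (Fin.cons false y) - g (Fin.cons true y)) / 2

lemma expect_succ (g : (Fin (n + 1) → Bool) → ℝ) : expect (n + 1) g = expect n (headAvg g) := by
  have hsum : ∑ x, g x = ∑ y, (g (Fin.cons false y) + g (Fin.cons true y)) := by
    rw [← (Fin.consEquiv fun _ => Bool).sum_comp, Fintype.sum_prod_type, Fintype.sum_bool,
      ← sum_add_distrib]
    exact sum_congr rfl fun y _ => add_comm _ _
  rw [expect, expect, hsum, pow_succ', ← div_div, sum_div]
  rfl

lemma parity_update {T : Finset (Fin n)} {i : Fin n} (hi : i ∉ T) (x : Fin n → Bool) (b : Bool) :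
    parity n T (update x i b) = parity n T x := by
  unfold parity
  congr 2
  exact filter_congr fun j hj => by rw [update_of_ne (ne_of_mem_of_not_mem hj hi)]

lemma parity_insert {T : Finset (Fin n)} {i : Fin n} (hi : i ∉ T) (x : Fin n → Bool) :
    parity n (insert i T) x = (if x i then -1 else 1) * parity n T x := by
  unfold parity
  rw [filter_insert]
  cases x i
  · simp
  · rw [if_pos rfl, card_insert_of_notMem fun h => hi (mem_filter.1 h).1, pow_succ]
    simp [mul_comm]

lemma parity_image_succ (T : Finset (Fin n)) (b : Bool) (y : Fin n → Bool) :
    parity (n + 1) (T.image Fin.succ) (Fin.cons b y) = parity n T y := by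
  unfold parity
  rw [filter_image, card_image_of_injective _ (Fin.succ_injective n)]
  simp

lemma fourierHat_const_mul (c : ℝ) (g : (Fin n → Bool) → ℝ) (S : Finset (Fin n)) :
    fourierHat n (fun x => c * g x) S = c * fourierHat n g S := by
  simp only [fourierHat, mul_assoc, expect_const_mul]

lemma fourierHat_image_succ (g : (Fin (n + 1) → Bool) → ℝ) (T : Finset (Fin n)) :
    fourierHat (n + 1) g (T.image Fin.succ) = fourierHat n (headAvg g) T := by
  rw [fourierHat, expect_succ]
  congr 1
  ext y
  simp only [headAvg, parity_image_succ]
  ring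

lemma fourierHat_insert_zero_image_succ (g : (Fin (n + 1) → Bool) → ℝ) (T : Finset (Fin n)) :
    fourierHat (n + 1) g (insert 0 (T.image Fin.succ)) = fourierHat n (headDiff g) T := by
  rw [fourierHat, expect_succ]
  congr 1
  ext y
  have h0 : (0 : Fin (n + 1)) ∉ T.image Fin.succ := by simp [Fin.succ_ne_zero]
  simp only [headAvg, headDiff, parity_insert h0, parity_image_succ, Fin.cons_zero,
    Bool.false_eq_true, ↓reduceIte]
  ring

lemma fourierHat_insert {i : Fin n} {T : Finset (Fin n)} (hi : i ∉ T) (f : (Fin n → Bool) → ℝ) :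
    fourierHat n f (insert i T) = -fourierHat n (dderiv n f i) T := by
  simp only [fourierHat]
  rw [expect_eq_expect_update_avg i, ← neg_one_mul, ← expect_const_mul]
  congr 1
  ext x
  simp only [parity_insert hi, parity_update hi, update_self, dderiv, Bool.false_eq_true,
    ↓reduceIte]
  ring

lemma sum_finset_fin_succ {M : Type*} [AddCommMonoid M] (F : Finset (Fin (n + 1)) → M) :
    ∑ S, F S = ∑ T : Finset (Fin n), (F (T.image Fin.succ) + F (insert 0 (T.image Fin.succ))) := by
  have huniv : (univ : Finset (Fin (n + 1))) = insert 0 (univ.image Fin.succ) := by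
    rw [Fin.univ_succ, cons_eq_insert, map_eq_image]
    rfl
  have hinj : Set.InjOn (fun T : Finset (Fin n) => T.image Fin.succ)
      ↑(univ : Finset (Fin n)).powerset :=
    fun _ _ _ _ h => image_injective (Fin.succ_injective n) h
  rw [← powerset_univ, huniv, sum_powerset_insert (by simp), powerset_image,
    sum_image hinj, sum_image hinj, powerset_univ, sum_add_distrib]

lemma influence_nonneg (κ : ℝ) (f : (Fin n → Bool) → ℝ) (i : Fin n) : 0 ≤ influence n κ f i :=
  expect_nonneg fun _ => Real.rpow_nonneg (abs_nonneg _) _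

lemma rpow_expect_add_rpow_expect_le {A B : (Fin n → Bool) → ℝ} (hA : ∀ x, 0 ≤ A x)
    (hB : ∀ x, 0 ≤ B x) {p : ℝ} (hp₀ : 0 < p) (hp₁ : p < 1) :
    expect n (fun x => A x ^ p) ^ (1 / p) + expect n (fun x => B x ^ p) ^ (1 / p) ≤
      expect n (fun x => (A x + B x) ^ p) ^ (1 / p) := by
  have hc : (0 : ℝ) ≤ ((2 : ℝ) ^ n)⁻¹ := by positivity
  have hscale : ∀ C : (Fin n → Bool) → ℝ, (∀ x, 0 ≤ C x) →
      expect n (fun x => C x ^ p) ^ (1 / p) =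
        ((2 : ℝ) ^ n)⁻¹ ^ (1 / p) * (∑ x, C x ^ p) ^ (1 / p) := fun C hC => by
    rw [expect, div_eq_inv_mul, Real.mul_rpow hc (sum_nonneg fun x _ => Real.rpow_nonneg (hC x) p)]
  rw [hscale A hA, hscale B hB, hscale _ fun x => add_nonneg (hA x) (hB x), ← mul_add]
  exact mul_le_mul_of_nonneg_left
    (Real.Lp_add_Lp_le_Lp_add univ hp₀ hp₁ (fun x _ => hA x) fun x _ => hB x)
    (Real.rpow_nonneg hc _)

variable {κ : ℝ}

lemma rpow_expect_headAvg_add_le (hκ₁ : 1 < κ) (hκ₂ : κ < 2) (g : (Fin (n + 1) → Bool) → ℝ) :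
    expect n (fun y => |headAvg g y| ^ κ) ^ (2 / κ) +
        expect n (fun y => |√(κ - 1) * headDiff g y| ^ κ) ^ (2 / κ) ≤
      expect (n + 1) (fun x => |g x| ^ κ) ^ (2 / κ) := by
  have hexp : 2 / κ = 1 / (κ / 2) := (one_div_div κ 2).symm
  have hp₀ : 0 < κ / 2 := by linarith
  have htwo_point : ∀ y, ((headAvg g y) ^ 2 + (√(κ - 1) * headDiff g y) ^ 2) ^ (κ / 2) ≤
      headAvg (fun x => |g x| ^ κ) y := fun y => by
    have hadd : headAvg g y + headDiff g y = g (Fin.cons false y) := by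
      simp only [headAvg, headDiff]; ring
    have hsub : headAvg g y - headDiff g y = g (Fin.cons true y) := by
      simp only [headAvg, headDiff]; ring
    rw [mul_pow, Real.sq_sqrt (by linarith)]
    exact (Real.sq_add_mul_sq_rpow_le hκ₁ hκ₂ _ _).trans_eq (by rw [hadd, hsub]; rfl)
  simp only [← Real.sq_rpow_div_two (headAvg g _), ← Real.sq_rpow_div_two (_ * headDiff g _)]
  rw [hexp, expect_succ]
  refine (rpow_expect_add_rpow_expect_le (fun _ => sq_nonneg _) (fun _ => sq_nonneg _) hp₀
    (by linarith)).trans ?_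
  exact Real.rpow_le_rpow (expect_nonneg fun y => by positivity) (expect_mono htwo_point)
    (by positivity)

/-- `(κ, 2)`-hypercontractivity of the noise operator `T_ρ` with `ρ = √(κ - 1)`. -/
theorem sum_pow_card_mul_fourierHat_sq_le (hκ₁ : 1 < κ) (hκ₂ : κ < 2) :
    ∀ {n : ℕ} (g : (Fin n → Bool) → ℝ),
      ∑ S, (κ - 1) ^ S.card * fourierHat n g S ^ 2 ≤ expect n (fun x => |g x| ^ κ) ^ (2 / κ)
  | 0, g => by
    have hexpect : ∀ h : (Fin 0 → Bool) → ℝ, expect 0 h = h Fin.elim0 := fun h => by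
      rw [expect, univ_unique, sum_singleton, pow_zero, div_one]
      exact congrArg h (Subsingleton.elim _ _)
    rw [univ_unique, sum_singleton, fourierHat, hexpect, hexpect, ← Real.sq_rpow_div_two,
      ← Real.rpow_mul (sq_nonneg _), div_mul_div_comm, mul_comm κ 2, div_self (by positivity),
      Real.rpow_one]
    simp [Subsingleton.elim (default : Finset (Fin 0)) ∅, parity]
  | n + 1, g => by
    have h0 : ∀ T : Finset (Fin n), (0 : Fin (n + 1)) ∉ T.image Fin.succ := fun T => by
      simp [Fin.succ_ne_zero]
    have hsplit : ∑ S, (κ - 1) ^ S.card * fourierHat (n + 1) g S ^ 2 =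
        ∑ T, (κ - 1) ^ T.card * fourierHat n (headAvg g) T ^ 2 +
          ∑ T, (κ - 1) ^ T.card * fourierHat n (fun y => √(κ - 1) * headDiff g y) T ^ 2 := by
      rw [sum_finset_fin_succ, sum_add_distrib]
      congr 1 <;> refine sum_congr rfl fun T _ => ?_
      · rw [card_image_of_injective _ (Fin.succ_injective n), fourierHat_image_succ]
      · rw [card_insert_of_notMem (h0 T), card_image_of_injective _ (Fin.succ_injective n),
          fourierHat_insert_zero_image_succ, fourierHat_const_mul, mul_pow,
          Real.sq_sqrt (by linarith), pow_succ]
        ring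
    rw [hsplit]
    exact (add_le_add (sum_pow_card_mul_fourierHat_sq_le hκ₁ hκ₂ _)
      (sum_pow_card_mul_fourierHat_sq_le hκ₁ hκ₂ _)).trans (rpow_expect_headAvg_add_le hκ₁ hκ₂ g)

lemma sum_fourierHat_sq_le_influence (hκ₁ : 1 < κ) (hκ₂ : κ < 2) (f : (Fin n → Bool) → ℝ)
    (d : ℕ) (i : Fin n) :
    ∑ S with i ∈ S ∧ S.card ≤ d, fourierHat n f S ^ 2 ≤
      (κ - 1) ^ ((1 : ℝ) - d) * influence n κ f i ^ (2 / κ) := by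
  have hρ : 0 < κ - 1 := by linarith
  set C := (κ - 1) ^ ((1 : ℝ) - d)
  have hweight : ∀ S ∈ (univ.filter fun S : Finset (Fin n) => i ∈ S ∧ S.card ≤ d),
      fourierHat n f S ^ 2 ≤ C * ((κ - 1) ^ (S.card - 1) * fourierHat n f S ^ 2) := by
    intro S hS
    obtain ⟨hiS, hSd⟩ := (mem_filter.1 hS).2
    have hcard : ((S.card - 1 : ℕ) : ℝ) = S.card - 1 := by
      rw [Nat.cast_sub (card_pos.2 ⟨i, hiS⟩), Nat.cast_one]
    have hSd' : (S.card : ℝ) ≤ d := by exact_mod_cast hSd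
    have hone : 1 ≤ C * (κ - 1) ^ (S.card - 1) := by
      rw [← Real.rpow_natCast, ← Real.rpow_add hρ, hcard]
      exact Real.one_le_rpow_of_pos_of_le_one_of_nonpos hρ (by linarith) (by linarith)
    nlinarith [sq_nonneg (fourierHat n f S)]
  calc ∑ S with i ∈ S ∧ S.card ≤ d, fourierHat n f S ^ 2
      ≤ C * ∑ S with i ∈ S ∧ S.card ≤ d, (κ - 1) ^ (S.card - 1) * fourierHat n f S ^ 2 := by
        rw [mul_sum]; exact sum_le_sum hweight
    _ ≤ C * ∑ S with i ∈ S, (κ - 1) ^ (S.card - 1) * fourierHat n f S ^ 2 := by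
        gcongr
        exact And.left
    _ = C * ∑ T with i ∉ T, (κ - 1) ^ T.card * fourierHat n (dderiv n f i) T ^ 2 := by
        rw [sum_filter_mem_eq_sum_filter_not_mem_insert]
        refine congrArg _ (sum_congr rfl fun T hT => ?_)
        have hiT := (mem_filter.1 hT).2
        rw [card_insert_of_notMem hiT, Nat.add_sub_cancel, fourierHat_insert hiT, neg_sq]
    _ ≤ C * ∑ T, (κ - 1) ^ T.card * fourierHat n (dderiv n f i) T ^ 2 := by
        gcongr
        exact subset_univ _
    _ ≤ C * influence n κ f i ^ (2 / κ) := by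
        gcongr
        exact sum_pow_card_mul_fourierHat_sq_le hκ₁ hκ₂ _

lemma sum_fourierHat_sq_le_of_influence_le (hκ₁ : 1 < κ) (hκ₂ : κ < 2)
    {f : (Fin n → Bool) → ℝ} {α : ℝ} {i : Fin n} (hi : influence n κ f i ≤ α) (d : ℕ) :
    ∑ S with i ∈ S ∧ S.card ≤ d, fourierHat n f S ^ 2 ≤
      (κ - 1) ^ ((1 : ℝ) - d) * (α ^ (2 / κ - 1) * influence n κ f i) := by
  refine (sum_fourierHat_sq_le_influence hκ₁ hκ₂ f d i).trans ?_
  gcongr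
  exact Real.rpow_le_rpow_sub_one_mul (influence_nonneg κ f i) hi
    ((one_le_div₀ (by linarith)).2 hκ₂.le)

end BooleanCube

theorem low_influence_fourier_tail_bound_general (n : ℕ) (f : (Fin n → Bool) → ℝ)
    (κ : ℝ) (hκ₁ : 1 < κ) (hκ₂ : κ < 2) (α : ℝ) (hα : 0 < α) (d : ℕ)
    (I : Finset (Fin n)) (hI : I = Finset.univ.filter (fun i => α ≤ influence n κ f i)) :
    ∑ S ∈ Finset.univ.filter (fun S : Finset (Fin n) => ¬ S ⊆ I ∧ S.card ≤ d),
        (fourierHat n f S) ^ 2 ≤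
      (κ - 1) ^ ((1 : ℝ) - (d : ℝ)) * α ^ (2 / κ - 1) * ∑ i : Fin n, influence n κ f i := by
  set C := (κ - 1) ^ ((1 : ℝ) - d)
  set A := univ.filter fun S : Finset (Fin n) => ¬S ⊆ I ∧ S.card ≤ d
  have hlow : ∀ i ∈ Iᶜ, influence n κ f i ≤ α := fun i hi =>
    (by simpa [hI] using mem_compl.1 hi : influence n κ f i < α).le
  calc ∑ S ∈ A, fourierHat n f S ^ 2
      ≤ ∑ i ∈ Iᶜ, ∑ S ∈ A with i ∈ S, fourierHat n f S ^ 2 := by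
        refine sum_le_sum_sum_filter_mem (fun S _ => sq_nonneg _) fun S hS => ?_
        obtain ⟨i, hiS, hiI⟩ := not_subset.1 (mem_filter.1 hS).2.1
        exact ⟨i, mem_compl.2 hiI, hiS⟩
    _ ≤ ∑ i ∈ Iᶜ, C * (α ^ (2 / κ - 1) * influence n κ f i) := by
        refine sum_le_sum fun i hi => le_trans ?_
          (sum_fourierHat_sq_le_of_influence_le hκ₁ hκ₂ (hlow i hi) d)
        refine sum_le_sum_of_subset_of_nonneg (fun S hS => ?_) fun S _ _ => sq_nonneg _
        obtain ⟨hSA, hiS⟩ := mem_filter.1 hS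
        exact mem_filter.2 ⟨mem_univ S, hiS, (mem_filter.1 hSA).2.2⟩
    _ ≤ ∑ i, C * (α ^ (2 / κ - 1) * influence n κ f i) :=
        sum_le_sum_of_subset_of_nonneg (subset_univ _) fun i _ _ => by
          have := influence_nonneg κ f i
          positivity
    _ = C * α ^ (2 / κ - 1) * ∑ i, influence n κ f i := by
        rw [← mul_sum, ← mul_sum, mul_assoc]

theorem low_influence_fourier_tail_bound (n : ℕ) (f : (Fin n → Bool) → ℝ)
    (κ : ℝ) (hκ₁ : 1 < κ) (hκ₂ : κ < 2) (α : ℝ) (hα : 0 < α) (d : ℕ) (hd : 1 ≤ d)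
    (I : Finset (Fin n)) (hI : I = Finset.univ.filter (fun i => α ≤ influence n κ f i)) :
    ∑ S ∈ Finset.univ.filter (fun S : Finset (Fin n) => ¬ S ⊆ I ∧ S.card ≤ d),
        (fourierHat n f S) ^ 2 ≤
      (κ - 1) ^ ((1 : ℝ) - (d : ℝ)) * α ^ (2 / κ - 1) * ∑ i : Fin n, influence n κ f i :=
  low_influence_fourier_tail_bound_general n f κ hκ₁ hκ₂ α hα d I hI
end
end

section
/- Let a ≥ 1 be a real number, let n ≥ 4a be an integer, let f: {0,1}^n → [0,1] be an a-self-bounding function, and let ε ∈ (0,1]. Set d = ⌈(4a/ε)·ln(6/ε)⌉ and α = 3^{−2d−1}·ε⁴/a². Then there exists a polynomial p = Σ_{S⊆[n], |S|≤d} p̂(S) χ_S of degree at most d such that ‖f − p‖_1 ≤ ε and the spectral norm satisfies ‖p̂‖_1 = Σ_{S⊆[n]} |p̂(S)| ≤ (1 + a/α)^d. -/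
/-!
Write `L i f x = (f x - f x') / 2`, where `x'` is `x` with coordinate `i` flipped, and
`β i = 𝔼 |L i f|`; self-boundedness gives `∑ i, β i ≤ a · 𝔼 f ≤ a`. The polynomial keeps the
coefficients `ρ ^ |S| · f̂ S` of `T_ρ f`, with `ρ = 1 - ε / (4a)`, for the sets `S` of size at
most `d` contained in the set `J` of coordinates with `β i ≥ α`. Its `L¹` distance to `f` is at most
* `‖f - T_ρ f‖₁ ≤ (1 - ρ) ∑ β i ≤ ε / 4`, since noise on coordinate `i` moves `f` by at most
  `(1 - ρ) β i` in `L¹`, plus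
* the `L²` norm of the discarded part of `T_ρ f`: the sets of size `> d` carry weight at most
  `ρ ^ (2d) ≤ (ε / 6) ^ 2`, and for `i ∉ J` the sets `S ∋ i` of size at most `d` carry weight at
  most `3 ^ (d - 1) β i ^ (3/2) ≤ 3 ^ (d - 1) √α β i` (Cauchy–Schwarz and Bonami's lemma applied
  to `L i f`), in total at most `3 ^ (d - 1) √α a = ε ^ 2 / √27`.
Every kept coefficient has absolute value at most `1`, and there are at most `(|J| + 1) ^ d` of
them, where `|J| ≤ a / α`.
-/

noncomputable section

open scoped BigOperators

lemma sq_expect_mul_le_expect_abs_mul {ι : Type*} [Fintype ι] (u v : ι → ℝ) :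
    (𝔼 x, u x * v x) ^ 2 ≤ (𝔼 x, |u x|) * 𝔼 x, |u x| * v x ^ 2 := calc
  (𝔼 x, u x * v x) ^ 2 ≤ (𝔼 x, √|u x| * (√|u x| * |v x|)) ^ 2 := by
    rw [← sq_abs]
    gcongr
    refine (Finset.abs_expect_le _ _).trans_eq (Finset.expect_congr rfl fun x _ => ?_)
    rw [← mul_assoc, Real.mul_self_sqrt (abs_nonneg _), abs_mul]
  _ ≤ (𝔼 x, √|u x| ^ 2) * 𝔼 x, (√|u x| * |v x|) ^ 2 := Finset.expect_mul_sq_le_sq_mul_sq _ _ _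
  _ = (𝔼 x, |u x|) * 𝔼 x, |u x| * v x ^ 2 := by simp [mul_pow]

lemma expect_abs_le_sqrt_expect_sq {ι : Type*} [Fintype ι] [Nonempty ι] (v : ι → ℝ) :
    𝔼 x, |v x| ≤ √(𝔼 x, v x ^ 2) := by
  refine Real.le_sqrt_of_sq_le ?_
  simpa using sq_expect_mul_le_expect_abs_mul (fun _ => (1 : ℝ)) fun x => |v x|

lemma sqrt_add_le_sqrt_add_sqrt {x y : ℝ} (hx : 0 ≤ x) (hy : 0 ≤ y) : √(x + y) ≤ √x + √y :=
  Real.sqrt_le_iff.2 ⟨by positivity, by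
    nlinarith [Real.sq_sqrt hx, Real.sq_sqrt hy, Real.sqrt_nonneg x, Real.sqrt_nonneg y]⟩

namespace BoolCube

open Finset

variable {n : ℕ}

section Parity

def boolSign (b : Bool) : ℝ := if b then -1 else 1

@[simp] lemma boolSign_not (b : Bool) : boolSign (!b) = -boolSign b := by
  cases b <;> simp [boolSign]

lemma boolSign_mul_self (b : Bool) : boolSign b * boolSign b = 1 := by
  cases b <;> simp [boolSign]

lemma parity_eq_prod (S : Finset (Fin n)) (x : Fin n → Bool) :
    parity n S x = ∏ i ∈ S, boolSign (x i) := by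
  simp [parity, boolSign, prod_ite]

lemma parity_mul_self (S : Finset (Fin n)) (x : Fin n → Bool) :
    parity n S x * parity n S x = 1 := by
  simp [parity_eq_prod, ← prod_mul_distrib, boolSign_mul_self]

lemma abs_parity (S : Finset (Fin n)) (x : Fin n → Bool) : |parity n S x| = 1 := by
  simp [parity]

lemma parity_insert {i : Fin n} {T : Finset (Fin n)} (hi : i ∉ T) (x : Fin n → Bool) :
    parity n (insert i T) x = boolSign (x i) * parity n T x := by
  rw [parity_eq_prod, parity_eq_prod, prod_insert hi]

def flipCoord (i : Fin n) (x : Fin n → Bool) : Fin n → Bool := Function.update x i (!x i)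

lemma flipCoord_involutive (i : Fin n) : Function.Involutive (flipCoord i) := by
  intro x
  ext j
  by_cases h : j = i
  · subst h; simp [flipCoord]
  · simp [flipCoord, h]

lemma parity_flipCoord (S : Finset (Fin n)) (i : Fin n) (x : Fin n → Bool) :
    parity n S (flipCoord i x) = (if i ∈ S then -1 else 1) * parity n S x := by
  simp only [parity_eq_prod]
  split_ifs with hi
  · rw [← insert_erase hi, prod_insert (notMem_erase i S), prod_insert (notMem_erase i S)]
    rw [prod_congr rfl fun j hj => by rw [flipCoord, Function.update_of_ne (ne_of_mem_erase hj)]]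
    simp [flipCoord]
  · rw [one_mul]
    exact prod_congr rfl fun j hj => by
      rw [flipCoord, Function.update_of_ne (ne_of_mem_of_not_mem hj hi)]

end Parity

section Expectation

lemma expect_eq_finsetExpect (g : (Fin n → Bool) → ℝ) : expect n g = 𝔼 x, g x := by
  simp [_root_.expect, Fintype.expect_eq_sum_div_card]

lemma expect_comp_flipCoord (i : Fin n) (g : (Fin n → Bool) → ℝ) :
    𝔼 x, g (flipCoord i x) = 𝔼 x, g x :=
  Fintype.expect_bijective _ (flipCoord_involutive i).bijective _ _ fun _ => rfl

lemma expect_eq_zero_of_comp_flipCoord {i : Fin n} {g : (Fin n → Bool) → ℝ}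
    (hg : ∀ x, g (flipCoord i x) = -g x) : 𝔼 x, g x = 0 := by
  have h := expect_comp_flipCoord i g
  simp only [hg, expect_neg_distrib] at h
  linarith

lemma expect_parity_mul_parity (S T : Finset (Fin n)) :
    𝔼 x, parity n S x * parity n T x = if S = T then 1 else 0 := by
  split_ifs with h
  · simp [h, parity_mul_self]
  · obtain ⟨i, hi⟩ : ∃ i, ¬(i ∈ S ↔ i ∈ T) := by
      by_contra! h'
      exact h (ext h')
    apply expect_eq_zero_of_comp_flipCoord (i := i)
    intro x
    rw [parity_flipCoord, parity_flipCoord]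
    by_cases hS : i ∈ S <;> by_cases hT : i ∈ T <;> simp_all

end Expectation

section Fourier

def fourierCoeff (f : (Fin n → Bool) → ℝ) (S : Finset (Fin n)) : ℝ := 𝔼 x, f x * parity n S x

def fourierSum (w : Finset (Fin n) → ℝ) (x : Fin n → Bool) : ℝ := ∑ S, w S * parity n S x

lemma sum_parity_mul_parity (x y : Fin n → Bool) :
    ∑ S, parity n S x * parity n S y = if x = y then 2 ^ n else 0 := by
  have hprod : ∑ S, parity n S x * parity n S y = ∏ i, (1 + boolSign (x i) * boolSign (y i)) := by
    rw [prod_one_add, powerset_univ]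
    simp [parity_eq_prod, prod_mul_distrib]
  rw [hprod]
  split_ifs with h
  · simp [h, boolSign_mul_self]
    norm_num
  · obtain ⟨i, hi⟩ := Function.ne_iff.1 h
    apply prod_eq_zero (mem_univ i)
    cases hx : x i <;> cases hy : y i <;> simp_all [boolSign]

theorem fourierSum_fourierCoeff (f : (Fin n → Bool) → ℝ) : fourierSum (fourierCoeff f) = f := by
  ext x
  simp only [fourierSum, fourierCoeff, Fintype.expect_eq_sum_div_card, sum_div, sum_mul]
  rw [sum_comm]
  simp_rw [mul_div_right_comm _ (parity n _ _), mul_assoc, ← mul_sum, sum_parity_mul_parity]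
  simp

lemma expect_mul_fourierSum (g : (Fin n → Bool) → ℝ) (w : Finset (Fin n) → ℝ) :
    𝔼 x, g x * fourierSum w x = ∑ S, w S * fourierCoeff g S := by
  simp only [fourierSum, fourierCoeff, mul_sum, mul_expect]
  rw [expect_sum_comm]
  exact sum_congr rfl fun S _ => expect_congr rfl fun x _ => by ring

lemma fourierCoeff_fourierSum (w : Finset (Fin n) → ℝ) (S : Finset (Fin n)) :
    fourierCoeff (fourierSum w) S = w S := by
  simp only [fourierCoeff, fourierSum, sum_mul, mul_assoc]
  rw [expect_sum_comm]
  simp_rw [← mul_expect, expect_parity_mul_parity]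
  simp

lemma expect_fourierSum_sq (w : Finset (Fin n) → ℝ) : 𝔼 x, fourierSum w x ^ 2 = ∑ S, w S ^ 2 := by
  simp only [sq, expect_mul_fourierSum, fourierCoeff_fourierSum]

theorem sum_fourierCoeff_sq (f : (Fin n → Bool) → ℝ) :
    ∑ S, fourierCoeff f S ^ 2 = 𝔼 x, f x ^ 2 := by
  rw [← expect_fourierSum_sq, fourierSum_fourierCoeff]

lemma abs_fourierCoeff_le_one {f : (Fin n → Bool) → ℝ} (hf : ∀ x, |f x| ≤ 1) (S : Finset (Fin n)) :
    |fourierCoeff f S| ≤ 1 := by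
  refine (abs_expect_le _ _).trans (expect_le univ_nonempty fun x _ => ?_)
  rw [abs_mul, abs_parity, mul_one]
  exact hf x

end Fourier

section CoordinateSplit

variable (i : Fin n) (w : Finset (Fin n) → ℝ)

-- The operators `E_i` and `D_i` of O'Donnell's book, acting on Fourier coefficients.
def expectCoeff (S : Finset (Fin n)) : ℝ := if i ∈ S then 0 else w S

def derivCoeff (S : Finset (Fin n)) : ℝ := if i ∈ S then 0 else w (insert i S)

lemma sum_eq_sum_expectCoeff_add_sum_derivCoeff :
    ∑ S, w S = ∑ S, expectCoeff i w S + ∑ S, derivCoeff i w S := by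
  have hpow : (univ.erase i).powerset = univ.filter (fun S : Finset (Fin n) => i ∉ S) := by
    ext S
    simp [subset_erase]
  rw [← powerset_univ, ← insert_erase (mem_univ i), sum_powerset_insert (notMem_erase i univ),
    insert_erase (mem_univ i), powerset_univ, hpow, sum_filter, sum_filter]
  simp [expectCoeff, derivCoeff, ite_not]

variable {i w}

lemma expectCoeff_of_mem {S : Finset (Fin n)} (h : i ∈ S) : expectCoeff i w S = 0 := if_pos h

lemma derivCoeff_of_mem {S : Finset (Fin n)} (h : i ∈ S) : derivCoeff i w S = 0 := if_pos h

lemma expectCoeff_support {A : Finset (Fin n)} {k : ℕ}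
    (hw : ∀ S, w S ≠ 0 → S ⊆ insert i A ∧ #S ≤ k) (S : Finset (Fin n))
    (hS : expectCoeff i w S ≠ 0) : S ⊆ A ∧ #S ≤ k := by
  have hiS : i ∉ S := fun h => hS (expectCoeff_of_mem h)
  have := hw S (by simpa [expectCoeff, hiS] using hS)
  exact ⟨(subset_insert_iff_of_notMem hiS).1 this.1, this.2⟩

lemma derivCoeff_support {A : Finset (Fin n)} {k : ℕ}
    (hw : ∀ S, w S ≠ 0 → S ⊆ insert i A ∧ #S ≤ k + 1) (S : Finset (Fin n))
    (hS : derivCoeff i w S ≠ 0) : S ⊆ A ∧ #S ≤ k := by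
  have hiS : i ∉ S := fun h => hS (derivCoeff_of_mem h)
  have := hw (insert i S) (by simpa [derivCoeff, hiS] using hS)
  rw [card_insert_of_notMem hiS] at this
  exact ⟨(subset_insert_iff_of_notMem hiS).1 (insert_subset_iff.1 this.1).2, by omega⟩

variable (i w)

lemma sum_sq_eq_add :
    ∑ S, w S ^ 2 = ∑ S, expectCoeff i w S ^ 2 + ∑ S, derivCoeff i w S ^ 2 := by
  rw [sum_eq_sum_expectCoeff_add_sum_derivCoeff i]
  congr 1 <;> refine sum_congr rfl fun S _ => ?_
  · unfold expectCoeff; split_ifs <;> simp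
  · unfold derivCoeff; split_ifs <;> simp

lemma fourierSum_eq_add (x : Fin n → Bool) :
    fourierSum w x
      = fourierSum (expectCoeff i w) x + boolSign (x i) * fourierSum (derivCoeff i w) x := by
  rw [fourierSum, sum_eq_sum_expectCoeff_add_sum_derivCoeff i, fourierSum, fourierSum, mul_sum]
  congr 1
  · exact sum_congr rfl fun S _ => by unfold expectCoeff; split_ifs <;> simp
  · refine sum_congr rfl fun S _ => ?_
    unfold derivCoeff
    split_ifs with h
    · simp
    · simp only [parity_insert h x]; ring

variable {i w}

lemma fourierSum_flipCoord (x : Fin n → Bool) :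
    fourierSum w (flipCoord i x) = fourierSum (fun S => (if i ∈ S then -1 else 1) * w S) x := by
  simp only [fourierSum, parity_flipCoord]
  exact sum_congr rfl fun S _ => by ring

lemma fourierSum_flipCoord_of_mem (hw : ∀ S, i ∈ S → w S = 0) (x : Fin n → Bool) :
    fourierSum w (flipCoord i x) = fourierSum w x := by
  rw [fourierSum_flipCoord]
  congr 1
  ext S
  split_ifs with h <;> simp [hw S, h]

lemma fourierSum_flipCoord_of_not_mem (hw : ∀ S, i ∉ S → w S = 0) (x : Fin n → Bool) :
    fourierSum w (flipCoord i x) = -fourierSum w x := by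
  rw [fourierSum_flipCoord, fourierSum, fourierSum, ← sum_neg_distrib]
  refine sum_congr rfl fun S _ => ?_
  split_ifs with h <;> simp [hw S, h]

end CoordinateSplit

section Bonami

lemma expect_add_boolSign_mul_pow_four {i : Fin n} {g h : (Fin n → Bool) → ℝ}
    (hg : ∀ x, g (flipCoord i x) = g x) (hh : ∀ x, h (flipCoord i x) = h x) :
    𝔼 x, (g x + boolSign (x i) * h x) ^ 4
      = 𝔼 x, g x ^ 4 + 6 * 𝔼 x, g x ^ 2 * h x ^ 2 + 𝔼 x, h x ^ 4 := by
  have hodd : 𝔼 x, boolSign (x i) * (4 * g x ^ 3 * h x + 4 * g x * h x ^ 3) = 0 := by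
    refine expect_eq_zero_of_comp_flipCoord (i := i) fun x => ?_
    rw [hg, hh, flipCoord, Function.update_self, boolSign_not, neg_mul]
  have hexpand : ∀ x, (g x + boolSign (x i) * h x) ^ 4 = g x ^ 4 + 6 * (g x ^ 2 * h x ^ 2) + h x ^ 4
      + boolSign (x i) * (4 * g x ^ 3 * h x + 4 * g x * h x ^ 3) := by
    intro x
    linear_combination (6 * g x ^ 2 * h x ^ 2 + 4 * g x * h x ^ 3 * boolSign (x i)
      + h x ^ 4 * (boolSign (x i) ^ 2 + 1)) * boolSign_mul_self (x i)
  simp only [hexpand, expect_add_distrib, hodd, ← mul_expect, add_zero]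

lemma expect_fourierSum_pow_four_of_support_empty {w : Finset (Fin n) → ℝ}
    (hw : ∀ S, w S ≠ 0 → S = ∅) (k : ℕ) :
    𝔼 x, fourierSum w x ^ 4 ≤ 9 ^ k * (∑ S, w S ^ 2) ^ 2 := by
  have hsingle : ∀ S, S ≠ ∅ → w S = 0 := fun S hS => by_contra fun h => hS (hw S h)
  have hsum : ∀ x, fourierSum w x = w ∅ := fun x => by
    rw [fourierSum, sum_eq_single ∅ (fun S _ hS => by simp [hsingle S hS]) (by simp)]
    simp [parity]
  rw [sum_eq_single ∅ (fun S _ hS => by simp [hsingle S hS]) (by simp)]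
  simp only [hsum, Fintype.expect_const]
  nlinarith [one_le_pow₀ (by norm_num : (1 : ℝ) ≤ 9) (n := k), pow_two_nonneg (w ∅ ^ 2)]

lemma add_six_mul_add_le_of_sq_le_mul {A B X P Q : ℝ} {m : ℕ} (hA : A ≤ 9 ^ (m + 1) * P ^ 2)
    (hB : B ≤ 9 ^ m * Q ^ 2) (hB0 : 0 ≤ B) (hX : X ^ 2 ≤ A * B) (hP : 0 ≤ P) (hQ : 0 ≤ Q) :
    A + 6 * X + B ≤ 9 ^ (m + 1) * (P + Q) ^ 2 := by
  have h93 : ∀ j, (9 : ℝ) ^ j = 3 ^ (2 * j) := fun j => by rw [pow_mul]; norm_num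
  have hX' : X ≤ 3 ^ (2 * m + 1) * P * Q := by
    refine (abs_le_of_sq_le_sq' (hX.trans ?_) (by positivity)).2
    calc A * B ≤ 9 ^ (m + 1) * P ^ 2 * (9 ^ m * Q ^ 2) := mul_le_mul hA hB hB0 (by positivity)
      _ = (3 ^ (2 * m + 1) * P * Q) ^ 2 := by rw [h93, h93]; ring
  have h9 : (9 : ℝ) ^ m ≤ 9 ^ (m + 1) := pow_le_pow_right₀ (by norm_num) m.le_succ
  have h6 : (3 : ℝ) ^ (2 * m + 1) * 6 = 2 * 9 ^ (m + 1) := by rw [h93]; ring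
  nlinarith [mul_le_mul_of_nonneg_right h9 (sq_nonneg Q)]

/-- Bonami's lemma. -/
theorem expect_fourierSum_pow_four_le {k : ℕ} {w : Finset (Fin n) → ℝ}
    (hw : ∀ S, k < #S → w S = 0) :
    𝔼 x, fourierSum w x ^ 4 ≤ 9 ^ k * (∑ S, w S ^ 2) ^ 2 := by
  suffices ∀ A : Finset (Fin n), ∀ k w, (∀ S, w S ≠ 0 → S ⊆ A ∧ #S ≤ k) →
      𝔼 x, fourierSum w x ^ 4 ≤ 9 ^ k * (∑ S, w S ^ 2) ^ 2 from
    this univ k w fun S hS => ⟨subset_univ S, not_lt.1 (mt (hw S) hS)⟩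
  intro A
  induction A using Finset.induction_on with
  | empty =>
    exact fun k w hw => expect_fourierSum_pow_four_of_support_empty
      (fun S hS => subset_empty.1 (hw S hS).1) k
  | @insert i A _ ih =>
    rintro (_ | m) w hw
    · exact expect_fourierSum_pow_four_of_support_empty
        (fun S hS => card_eq_zero.1 (Nat.le_zero.1 (hw S hS).2)) 0
    have hg := ih (m + 1) _ (expectCoeff_support hw)
    have hh := ih m _ (derivCoeff_support hw)
    have hX := expect_mul_sq_le_sq_mul_sq univ (fun x => fourierSum (expectCoeff i w) x ^ 2)
      fun x => fourierSum (derivCoeff i w) x ^ 2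
    simp only [← pow_mul] at hX
    simp_rw [fourierSum_eq_add i w, sum_sq_eq_add i w]
    rw [expect_add_boolSign_mul_pow_four (fourierSum_flipCoord_of_mem fun _ => expectCoeff_of_mem)
      (fourierSum_flipCoord_of_mem fun _ => derivCoeff_of_mem)]
    exact add_six_mul_add_le_of_sq_le_mul hg hh (expect_nonneg fun x _ => by positivity) hX
      (sum_nonneg fun _ _ => sq_nonneg _) (sum_nonneg fun _ _ => sq_nonneg _)

end Bonami

section Influence

variable {f : (Fin n → Bool) → ℝ} {i : Fin n}

-- The operator `L_i` of O'Donnell's book: it keeps the Fourier coefficients of the sets `S ∋ i`.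
def laplacian (f : (Fin n → Bool) → ℝ) (i : Fin n) (x : Fin n → Bool) : ℝ :=
  (f x - f (flipCoord i x)) / 2

def l1Influence (f : (Fin n → Bool) → ℝ) (i : Fin n) : ℝ := 𝔼 x, |laplacian f i x|

lemma l1Influence_nonneg (f : (Fin n → Bool) → ℝ) (i : Fin n) : 0 ≤ l1Influence f i :=
  expect_nonneg fun _ _ => abs_nonneg _

lemma abs_laplacian_le_one (hf : ∀ x, |f x| ≤ 1) (i : Fin n) (x : Fin n → Bool) :
    |laplacian f i x| ≤ 1 := by
  rw [laplacian, abs_div, abs_two, div_le_one two_pos]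
  linarith [abs_sub (f x) (f (flipCoord i x)), hf x, hf (flipCoord i x)]

lemma expect_laplacian_mul_fourierSum {w : Finset (Fin n) → ℝ} (hw : ∀ S, i ∉ S → w S = 0)
    (f : (Fin n → Bool) → ℝ) :
    𝔼 x, laplacian f i x * fourierSum w x = ∑ S, w S * fourierCoeff f S := by
  have hflip : 𝔼 x, f (flipCoord i x) * fourierSum w x = -𝔼 x, f x * fourierSum w x := by
    rw [← expect_comp_flipCoord i]
    simp only [flipCoord_involutive i _, fourierSum_flipCoord_of_not_mem hw, mul_neg,
      expect_neg_distrib]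
  rw [← expect_mul_fourierSum]
  simp only [laplacian, sub_div, sub_mul, expect_sub_distrib, div_mul_eq_mul_div, ← expect_div,
    hflip]
  ring

def lowLaplacianCoeff (f : (Fin n → Bool) → ℝ) (i : Fin n) (d : ℕ) (S : Finset (Fin n)) : ℝ :=
  if i ∈ S ∧ #S ≤ d then fourierCoeff f S else 0

lemma expect_fourierSum_lowLaplacianCoeff_pow_four_le (f : (Fin n → Bool) → ℝ) (i : Fin n)
    (d : ℕ) :
    𝔼 x, fourierSum (lowLaplacianCoeff f i d) x ^ 4
      ≤ 9 ^ (d - 1) * (∑ S, lowLaplacianCoeff f i d S ^ 2) ^ 2 := by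
  set w := lowLaplacianCoeff f i d
  have hexp : expectCoeff i w = 0 := by
    ext S
    by_cases h : i ∈ S <;> simp [expectCoeff, w, lowLaplacianCoeff, h]
  have hdeg : ∀ S, d - 1 < #S → derivCoeff i w S = 0 := fun S hS => by
    by_cases h : i ∈ S
    · exact derivCoeff_of_mem h
    · simp only [derivCoeff, w, lowLaplacianCoeff, if_neg h, card_insert_of_notMem h]
      exact if_neg (by omega)
  have hfour : ∀ x, fourierSum w x ^ 4 = fourierSum (derivCoeff i w) x ^ 4 := fun x => by
    have hs : boolSign (x i) ^ 4 = (boolSign (x i) * boolSign (x i)) ^ 2 := by ring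
    have hzero : fourierSum (0 : Finset (Fin n) → ℝ) x = 0 := by simp [fourierSum]
    rw [fourierSum_eq_add i, hexp, hzero, zero_add, mul_pow, hs, boolSign_mul_self, one_pow,
      one_mul]
  have hsq : ∑ S, w S ^ 2 = ∑ S, derivCoeff i w S ^ 2 := by
    simp [sum_sq_eq_add i w, hexp]
  simpa only [hfour, hsq] using expect_fourierSum_pow_four_le hdeg

theorem sq_sum_lowLaplacianCoeff_sq_le (hf : ∀ x, |f x| ≤ 1) (i : Fin n) (d : ℕ) :
    (∑ S, lowLaplacianCoeff f i d S ^ 2) ^ 2 ≤ 9 ^ (d - 1) * l1Influence f i ^ 3 := by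
  set w := lowLaplacianCoeff f i d
  set m := ∑ S, w S ^ 2
  set β := l1Influence f i
  set L := laplacian f i
  set q := fourierSum w
  set Y := 𝔼 x, |L x| * q x ^ 2
  have hβ : 0 ≤ β := l1Influence_nonneg f i
  have hLq : 𝔼 x, L x * q x = m := by
    rw [expect_laplacian_mul_fourierSum fun S hS => by simp [w, lowLaplacianCoeff, hS]]
    refine sum_congr rfl fun S _ => ?_
    simp only [w, lowLaplacianCoeff]
    split_ifs <;> ring
  have hm : m ^ 2 ≤ β * Y := hLq ▸ sq_expect_mul_le_expect_abs_mul L q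
  have hY : Y ^ 2 ≤ β * (9 ^ (d - 1) * m ^ 2) := calc
    Y ^ 2 ≤ (𝔼 x, |L x| ^ 2) * 𝔼 x, (q x ^ 2) ^ 2 := expect_mul_sq_le_sq_mul_sq _ _ _
    _ ≤ β * (9 ^ (d - 1) * m ^ 2) := by
      refine mul_le_mul (expect_le_expect fun x _ => ?_) ?_ (expect_nonneg fun x _ => by positivity)
        hβ
      · exact pow_le_of_le_one (abs_nonneg _) (abs_laplacian_le_one hf i x) two_ne_zero
      · simpa only [← pow_mul] using expect_fourierSum_lowLaplacianCoeff_pow_four_le f i d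
  have hm4 : m ^ 2 * m ^ 2 ≤ 9 ^ (d - 1) * β ^ 3 * m ^ 2 := calc
    m ^ 2 * m ^ 2 ≤ (β * Y) ^ 2 := by rw [← sq]; gcongr
    _ = β ^ 2 * Y ^ 2 := by ring
    _ ≤ β ^ 2 * (β * (9 ^ (d - 1) * m ^ 2)) := by gcongr
    _ = 9 ^ (d - 1) * β ^ 3 * m ^ 2 := by ring
  rcases (sq_nonneg m).eq_or_lt with h | h
  · rw [← h]; positivity
  · exact le_of_mul_le_mul_right hm4 h

end Influence

section Noise

variable {ρ : ℝ}

-- The noise operator `T_ρ` acting on the coordinates in `A` only.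
def noise (ρ : ℝ) (A : Finset (Fin n)) (f : (Fin n → Bool) → ℝ) (x : Fin n → Bool) : ℝ :=
  fourierSum (fun S => ρ ^ #(S ∩ A) * fourierCoeff f S) x

lemma noise_empty (ρ : ℝ) (f : (Fin n → Bool) → ℝ) : noise ρ ∅ f = f := by
  ext x
  simp [noise, fourierSum_fourierCoeff]

lemma noise_insert {i : Fin n} {A : Finset (Fin n)} (hi : i ∉ A) (ρ : ℝ)
    (f : (Fin n → Bool) → ℝ) (x : Fin n → Bool) :
    noise ρ (insert i A) f x
      = (1 + ρ) / 2 * noise ρ A f x + (1 - ρ) / 2 * noise ρ A f (flipCoord i x) := by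
  rw [noise, noise, noise, fourierSum_flipCoord, fourierSum, fourierSum, fourierSum, mul_sum,
    mul_sum, ← sum_add_distrib]
  refine sum_congr rfl fun S _ => ?_
  by_cases h : i ∈ S
  · rw [inter_insert_of_mem h, card_insert_of_notMem fun h' => hi (mem_inter.1 h').2, if_pos h]
    ring
  · rw [inter_insert_of_notMem h, if_neg h]
    ring

lemma expect_abs_average_flipCoord_le (hρ : ρ ∈ Set.Icc 0 1) (i : Fin n)
    (g : (Fin n → Bool) → ℝ) :
    𝔼 x, |(1 + ρ) / 2 * g x + (1 - ρ) / 2 * g (flipCoord i x)| ≤ 𝔼 x, |g x| := calc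
  _ ≤ 𝔼 x, ((1 + ρ) / 2 * |g x| + (1 - ρ) / 2 * |g (flipCoord i x)|) :=
    expect_le_expect fun x _ => (abs_add_le _ _).trans_eq <| by
      rw [abs_mul, abs_mul, abs_of_nonneg (show 0 ≤ (1 + ρ) / 2 by linarith [hρ.1]),
        abs_of_nonneg (show 0 ≤ (1 - ρ) / 2 by linarith [hρ.2])]
  _ = 𝔼 x, |g x| := by
    rw [expect_add_distrib, ← mul_expect, ← mul_expect, expect_comp_flipCoord i fun x => |g x|]
    ring

theorem expect_abs_noise_sub_le (hρ : ρ ∈ Set.Icc 0 1) (A : Finset (Fin n))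
    (f : (Fin n → Bool) → ℝ) :
    𝔼 x, |noise ρ A f x - f x| ≤ (1 - ρ) * ∑ i ∈ A, l1Influence f i := by
  induction A using Finset.induction_on with
  | empty => simp [noise_empty]
  | @insert i A hi ih =>
    set g := fun x => noise ρ A f x - f x
    have hsplit : ∀ x, noise ρ (insert i A) f x - f x
        = ((1 + ρ) / 2 * g x + (1 - ρ) / 2 * g (flipCoord i x)) - (1 - ρ) * laplacian f i x :=
      fun x => by rw [noise_insert hi, laplacian]; ring
    calc 𝔼 x, |noise ρ (insert i A) f x - f x|
        ≤ 𝔼 x, (|(1 + ρ) / 2 * g x + (1 - ρ) / 2 * g (flipCoord i x)|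
            + (1 - ρ) * |laplacian f i x|) := expect_le_expect fun x _ => by
          rw [hsplit]
          exact (abs_sub _ _).trans_eq (by rw [abs_mul, abs_of_nonneg (sub_nonneg.2 hρ.2)])
      _ ≤ (1 - ρ) * ∑ i ∈ A, l1Influence f i + (1 - ρ) * l1Influence f i := by
          rw [expect_add_distrib, ← mul_expect]
          exact add_le_add ((expect_abs_average_flipCoord_le hρ i g).trans ih) le_rfl
      _ = (1 - ρ) * ∑ i ∈ insert i A, l1Influence f i := by rw [sum_insert hi]; ring

end Noise

section SelfBounding

lemma sub_min_update_eq_max (f : (Fin n → Bool) → ℝ) (i : Fin n) (x : Fin n → Bool) :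
    f x - min (f (Function.update x i false)) (f (Function.update x i true))
      = max (f x - f (flipCoord i x)) 0 := by
  have hx : Function.update x i (x i) = x := Function.update_eq_self i x
  cases hxi : x i
  · rw [hxi] at hx
    rw [hx, show Function.update x i true = flipCoord i x by simp [flipCoord, hxi]]
    rcases le_total (f x) (f (flipCoord i x)) with h | h <;> simp [h]
  · rw [hxi] at hx
    rw [hx, show Function.update x i false = flipCoord i x by simp [flipCoord, hxi]]
    rcases le_total (f x) (f (flipCoord i x)) with h | h <;> simp [h]

lemma l1Influence_eq_expect_max (f : (Fin n → Bool) → ℝ) (i : Fin n) :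
    l1Influence f i = 𝔼 x, max (f x - f (flipCoord i x)) 0 := by
  have habs : ∀ x, |laplacian f i x| = (max (f x - f (flipCoord i x)) 0
      + max (f (flipCoord i x) - f (flipCoord i (flipCoord i x))) 0) / 2 := fun x => by
    rw [flipCoord_involutive i x, laplacian, abs_div, abs_two,
      ← max_zero_add_max_neg_zero_eq_abs_self, neg_sub]
  simp_rw [l1Influence, habs, ← expect_div, expect_add_distrib,
    expect_comp_flipCoord i fun x => max (f x - f (flipCoord i x)) 0]
  ring

theorem sum_l1Influence_le {a : ℝ} {f : (Fin n → Bool) → ℝ} (hf : SelfBounding n a f) :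
    ∑ i, l1Influence f i ≤ a * 𝔼 x, f x := by
  simp_rw [l1Influence_eq_expect_max, ← expect_sum_comm, ← sub_min_update_eq_max, mul_expect]
  exact expect_le_expect fun x _ => (hf x).2

end SelfBounding

section Approximation

variable {f : (Fin n → Bool) → ℝ} {ρ α : ℝ}

def heavyCoords (f : (Fin n → Bool) → ℝ) (α : ℝ) : Finset (Fin n) :=
  univ.filter fun i => α ≤ l1Influence f i

def approxCoeff (f : (Fin n → Bool) → ℝ) (ρ : ℝ) (d : ℕ) (α : ℝ) (S : Finset (Fin n)) : ℝ :=
  if #S ≤ d ∧ S ⊆ heavyCoords f α then ρ ^ #S * fourierCoeff f S else 0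

lemma card_heavyCoords_le (hα : 0 < α) (f : (Fin n → Bool) → ℝ) :
    (#(heavyCoords f α) : ℝ) ≤ (∑ i, l1Influence f i) / α := by
  rw [le_div_iff₀ hα]
  calc #(heavyCoords f α) * α = ∑ i ∈ heavyCoords f α, α := by simp
    _ ≤ ∑ i ∈ heavyCoords f α, l1Influence f i := sum_le_sum fun i hi => (mem_filter.1 hi).2
    _ ≤ ∑ i, l1Influence f i :=
      sum_le_sum_of_subset_of_nonneg (subset_univ _) fun i _ _ => l1Influence_nonneg f i

lemma sum_range_choose_le_pow (j d : ℕ) : ∑ k ∈ range (d + 1), j.choose k ≤ (j + 1) ^ d := by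
  induction d with
  | zero => simp
  | succ d ih =>
    have hchoose : j.choose (d + 1) ≤ j * (j + 1) ^ d := (Nat.choose_le_pow j (d + 1)).trans <| by
      rw [pow_succ']; exact Nat.mul_le_mul_left j (Nat.pow_le_pow_left j.le_succ d)
    rw [sum_range_succ, pow_succ, mul_add_one, add_comm ((j + 1) ^ d * j), mul_comm _ j]
    exact add_le_add ih hchoose

lemma card_filter_powerset_card_le {ι : Type*} (J : Finset ι) (d : ℕ) :
    #(J.powerset.filter fun S => #S ≤ d) ≤ (#J + 1) ^ d := by
  classical
  calc #(J.powerset.filter fun S => #S ≤ d)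
      ≤ #((range (d + 1)).biUnion fun k => J.powersetCard k) := card_le_card fun S hS => by
        simp only [mem_filter, mem_powerset] at hS
        exact mem_biUnion.2 ⟨#S, mem_range.2 (by omega), mem_powersetCard.2 ⟨hS.1, rfl⟩⟩
    _ ≤ ∑ k ∈ range (d + 1), #(J.powersetCard k) := card_biUnion_le
    _ = ∑ k ∈ range (d + 1), (#J).choose k := by simp_rw [card_powersetCard]
    _ ≤ (#J + 1) ^ d := sum_range_choose_le_pow _ _

theorem sum_abs_approxCoeff_le (hf : ∀ x, |f x| ≤ 1) (hρ : ρ ∈ Set.Icc 0 1) (hα : 0 < α)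
    (d : ℕ) : ∑ S, |approxCoeff f ρ d α S| ≤ (1 + (∑ i, l1Influence f i) / α) ^ d := calc
  ∑ S, |approxCoeff f ρ d α S| ≤ ∑ S, if #S ≤ d ∧ S ⊆ heavyCoords f α then 1 else 0 :=
    sum_le_sum fun S _ => by
      unfold approxCoeff
      split_ifs
      · rw [abs_mul, abs_pow, abs_of_nonneg hρ.1]
        exact mul_le_one₀ (pow_le_one₀ hρ.1 hρ.2) (abs_nonneg _) (abs_fourierCoeff_le_one hf S)
      · simp
  _ = #((heavyCoords f α).powerset.filter fun S => #S ≤ d) := by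
    rw [sum_boole]
    congr 2
    ext S
    simp [and_comm]
  _ ≤ ((#(heavyCoords f α) + 1) ^ d : ℕ) := by exact_mod_cast card_filter_powerset_card_le _ d
  _ ≤ (1 + (∑ i, l1Influence f i) / α) ^ d := by
    push_cast
    exact pow_le_pow_left₀ (by positivity) (by linarith [card_heavyCoords_le hα f]) d

lemma sum_lowLaplacianCoeff_sq_le_of_le (hf : ∀ x, |f x| ≤ 1) {i : Fin n} (d : ℕ)
    (hβα : l1Influence f i ≤ α) :
    ∑ S, lowLaplacianCoeff f i d S ^ 2 ≤ √(9 ^ (d - 1) * α) * l1Influence f i := by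
  have hβ := l1Influence_nonneg f i
  calc ∑ S, lowLaplacianCoeff f i d S ^ 2
      = √((∑ S, lowLaplacianCoeff f i d S ^ 2) ^ 2) :=
        (Real.sqrt_sq (sum_nonneg fun _ _ => sq_nonneg _)).symm
    _ ≤ √(9 ^ (d - 1) * α * l1Influence f i ^ 2) := Real.sqrt_le_sqrt <|
        (sq_sum_lowLaplacianCoeff_sq_le hf i d).trans <| calc
          9 ^ (d - 1) * l1Influence f i ^ 3
              = 9 ^ (d - 1) * l1Influence f i ^ 2 * l1Influence f i := by ring
          _ ≤ 9 ^ (d - 1) * l1Influence f i ^ 2 * α := by gcongr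
          _ = 9 ^ (d - 1) * α * l1Influence f i ^ 2 := by ring
    _ = √(9 ^ (d - 1) * α) * l1Influence f i := by
      rw [Real.sqrt_mul' _ (sq_nonneg _), Real.sqrt_sq hβ]

lemma sum_sq_fourierCoeff_light_le (hf : ∀ x, |f x| ≤ 1) (d : ℕ) (α : ℝ) :
    ∑ S, (if #S ≤ d ∧ ¬S ⊆ heavyCoords f α then fourierCoeff f S ^ 2 else 0)
      ≤ √(9 ^ (d - 1) * α) * ∑ i, l1Influence f i := by
  set H := heavyCoords f α
  have hcover : ∀ S, (if #S ≤ d ∧ ¬S ⊆ H then fourierCoeff f S ^ 2 else 0)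
      ≤ ∑ i ∈ Hᶜ, lowLaplacianCoeff f i d S ^ 2 := fun S => by
    split_ifs with hS
    · obtain ⟨i, hiS, hiH⟩ := not_subset.1 hS.2
      refine le_of_eq_of_le ?_ (single_le_sum (fun j _ => sq_nonneg _) (mem_compl.2 hiH))
      simp [lowLaplacianCoeff, hiS, hS.1]
    · exact sum_nonneg fun _ _ => sq_nonneg _
  calc _ ≤ ∑ S, ∑ i ∈ Hᶜ, lowLaplacianCoeff f i d S ^ 2 := sum_le_sum fun S _ => hcover S
    _ = ∑ i ∈ Hᶜ, ∑ S, lowLaplacianCoeff f i d S ^ 2 := sum_comm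
    _ ≤ ∑ i ∈ Hᶜ, √(9 ^ (d - 1) * α) * l1Influence f i := sum_le_sum fun i hi => by
        simp only [H, heavyCoords, mem_compl, mem_filter, mem_univ, true_and, not_le] at hi
        exact sum_lowLaplacianCoeff_sq_le_of_le hf d hi.le
    _ ≤ √(9 ^ (d - 1) * α) * ∑ i, l1Influence f i := by
      rw [← mul_sum]
      exact mul_le_mul_of_nonneg_left (sum_le_sum_of_subset_of_nonneg (subset_univ _)
        fun i _ _ => l1Influence_nonneg f i) (Real.sqrt_nonneg _)

lemma fourierSum_sub_fourierSum (v w : Finset (Fin n) → ℝ) (x : Fin n → Bool) :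
    fourierSum v x - fourierSum w x = fourierSum (v - w) x := by
  simp [fourierSum, sub_mul]

lemma expect_sq_noise_sub_fourierSum_approxCoeff_le (hf : ∀ x, |f x| ≤ 1)
    (hρ : ρ ∈ Set.Icc 0 1) (d : ℕ) (α : ℝ) :
    𝔼 x, (noise ρ univ f x - fourierSum (approxCoeff f ρ d α) x) ^ 2
      ≤ ρ ^ (2 * d) + √(9 ^ (d - 1) * α) * ∑ i, l1Influence f i := by
  have hterm : ∀ S, (ρ ^ #S * fourierCoeff f S - approxCoeff f ρ d α S) ^ 2
      ≤ ρ ^ (2 * d) * fourierCoeff f S ^ 2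
        + if #S ≤ d ∧ ¬S ⊆ heavyCoords f α then fourierCoeff f S ^ 2 else 0 := fun S => by
    have hρS0 : 0 ≤ ρ ^ #S := pow_nonneg hρ.1 _
    have hρS : (ρ ^ #S) ^ 2 ≤ 1 := pow_le_one₀ (by positivity) (pow_le_one₀ hρ.1 hρ.2)
    unfold approxCoeff
    by_cases hd : #S ≤ d
    · by_cases hH : S ⊆ heavyCoords f α
      · simp only [hd, hH, true_and, if_true, sub_self, not_true, if_false]
        rw [zero_pow two_ne_zero, add_zero]
        exact mul_nonneg (pow_nonneg hρ.1 _) (sq_nonneg _)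
      · simp only [hd, hH, true_and, not_false_eq_true, if_true, if_false, sub_zero]
        nlinarith [sq_nonneg (fourierCoeff f S), pow_nonneg hρ.1 (2 * d)]
    · have hρd : ρ ^ #S ≤ ρ ^ d := pow_le_pow_of_le_one hρ.1 hρ.2 (by omega)
      simp only [hd, false_and, if_false, sub_zero, add_zero, pow_mul', mul_pow]
      gcongr
  have hparseval : ∑ S, fourierCoeff f S ^ 2 ≤ 1 := by
    rw [sum_fourierCoeff_sq]
    exact expect_le univ_nonempty fun x _ => (sq_le_one_iff_abs_le_one _).2 (hf x)
  calc 𝔼 x, (noise ρ univ f x - fourierSum (approxCoeff f ρ d α) x) ^ 2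
      = ∑ S, (ρ ^ #S * fourierCoeff f S - approxCoeff f ρ d α S) ^ 2 := by
        simp only [noise, inter_univ, fourierSum_sub_fourierSum, expect_fourierSum_sq, Pi.sub_apply]
    _ ≤ ∑ S, (ρ ^ (2 * d) * fourierCoeff f S ^ 2
          + if #S ≤ d ∧ ¬S ⊆ heavyCoords f α then fourierCoeff f S ^ 2 else 0) :=
        sum_le_sum fun S _ => hterm S
    _ ≤ ρ ^ (2 * d) + √(9 ^ (d - 1) * α) * ∑ i, l1Influence f i := by
      rw [sum_add_distrib, ← mul_sum]
      exact add_le_add (mul_le_of_le_one_right (pow_nonneg hρ.1 _) hparseval)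
        (sum_sq_fourierCoeff_light_le hf d α)

theorem expect_abs_sub_fourierSum_approxCoeff_le (hf : ∀ x, |f x| ≤ 1) (hρ : ρ ∈ Set.Icc 0 1)
    (d : ℕ) (α : ℝ) :
    𝔼 x, |f x - fourierSum (approxCoeff f ρ d α) x|
      ≤ (1 - ρ) * ∑ i, l1Influence f i + ρ ^ d
        + √(√(9 ^ (d - 1) * α) * ∑ i, l1Influence f i) := by
  have hβ : 0 ≤ ∑ i, l1Influence f i := sum_nonneg fun i _ => l1Influence_nonneg f i
  calc 𝔼 x, |f x - fourierSum (approxCoeff f ρ d α) x|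
      ≤ 𝔼 x, (|noise ρ univ f x - f x| + |noise ρ univ f x - fourierSum (approxCoeff f ρ d α) x|) :=
        expect_le_expect fun x _ =>
          (abs_sub_le _ (noise ρ univ f x) _).trans_eq (by rw [abs_sub_comm (f x)])
    _ ≤ (1 - ρ) * ∑ i, l1Influence f i
          + √(ρ ^ (2 * d) + √(9 ^ (d - 1) * α) * ∑ i, l1Influence f i) := by
        rw [expect_add_distrib]
        exact add_le_add (expect_abs_noise_sub_le hρ univ f) <|
          (expect_abs_le_sqrt_expect_sq _).trans
            (Real.sqrt_le_sqrt (expect_sq_noise_sub_fourierSum_approxCoeff_le hf hρ d α))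
    _ ≤ (1 - ρ) * ∑ i, l1Influence f i
          + (ρ ^ d + √(√(9 ^ (d - 1) * α) * ∑ i, l1Influence f i)) := by
        gcongr
        refine (sqrt_add_le_sqrt_add_sqrt (pow_nonneg hρ.1 _)
          (mul_nonneg (Real.sqrt_nonneg _) hβ)).trans_eq ?_
        rw [pow_mul', Real.sqrt_sq (pow_nonneg hρ.1 d)]
    _ = _ := by ring

end Approximation

end BoolCube

lemma one_sub_pow_le_of_log_inv_le {δ η : ℝ} {d : ℕ} (hδ : 0 ≤ 1 - δ) (hη : 0 < η)
    (h : Real.log η⁻¹ ≤ d * δ) : (1 - δ) ^ d ≤ η := calc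
  (1 - δ) ^ d ≤ Real.exp (-δ) ^ d := pow_le_pow_left₀ hδ (Real.one_sub_le_exp_neg δ) d
  _ = Real.exp (-(d * δ)) := by rw [← Real.exp_nat_mul]; ring_nf
  _ ≤ Real.exp (-Real.log η⁻¹) := Real.exp_le_exp.2 (neg_le_neg h)
  _ = η := by rw [Real.log_inv, neg_neg, Real.exp_log hη]

lemma nine_pow_pred_mul_three_rpow {d : ℕ} (hd : 1 ≤ d) :
    (9 : ℝ) ^ (d - 1) * (3 : ℝ) ^ (-(2 * (d : ℝ)) - 1) = 1 / 27 := by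
  have h9 : (9 : ℝ) ^ (d - 1) = (3 : ℝ) ^ (2 * (d : ℝ) - 2) := by
    rw [show (9 : ℝ) = 3 ^ (2 : ℝ) by norm_num, ← Real.rpow_natCast, ← Real.rpow_mul (by norm_num),
      Nat.cast_sub hd]
    ring_nf
  rw [h9, ← Real.rpow_add (by norm_num)]
  ring_nf
  norm_num [Real.rpow_neg]

lemma sqrt_sqrt_nine_pow_pred_mul_le {a ε B : ℝ} {d : ℕ} (ha : 0 < a) (hε : 0 < ε) (hd : 1 ≤ d)
    (hB : B ≤ a) :
    √(√(9 ^ (d - 1) * ((3 : ℝ) ^ (-(2 * (d : ℝ)) - 1) * ε ^ 4 / a ^ 2)) * B) ≤ ε / 2 := by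
  set C := 9 ^ (d - 1) * ((3 : ℝ) ^ (-(2 * (d : ℝ)) - 1) * ε ^ 4 / a ^ 2) with hCdef
  have hC : C * a ^ 2 = ε ^ 4 / 27 := calc
    C * a ^ 2 = 9 ^ (d - 1) * (3 : ℝ) ^ (-(2 * (d : ℝ)) - 1) * ε ^ 4 := by
      rw [hCdef]; field_simp
    _ = ε ^ 4 / 27 := by rw [nine_pow_pred_mul_three_rpow hd]; ring
  have hsqrt : √C * a ≤ ε ^ 2 / 4 := calc
    √C * a = √(C * a ^ 2) := by rw [Real.sqrt_mul' _ (sq_nonneg a), Real.sqrt_sq ha.le]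
    _ ≤ ε ^ 2 / 4 := by
      rw [hC]
      exact Real.sqrt_le_iff.2 ⟨by positivity, by nlinarith [pow_pos hε 4]⟩
  refine Real.sqrt_le_iff.2 ⟨by positivity, ?_⟩
  calc √C * B ≤ √C * a := by gcongr
    _ ≤ (ε / 2) ^ 2 := by linarith

open BoolCube

theorem selfbounding_low_spectral_norm_approx_general (n : ℕ) (a : ℝ) (ha : 1 ≤ a)
    (f : (Fin n → Bool) → ℝ) (hf01 : ∀ x, f x ∈ Set.Icc (0 : ℝ) 1) (hf : SelfBounding n a f)
    (ε : ℝ) (hε : ε ∈ Set.Ioc (0 : ℝ) 1)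
    (d : ℕ) (hd : d = ⌈(4 * a / ε) * Real.log (6 / ε)⌉₊)
    (α : ℝ) (hα : α = (3 : ℝ) ^ (-(2 * (d : ℝ)) - 1) * ε ^ 4 / a ^ 2) :
    ∃ c : Finset (Fin n) → ℝ,
      (∀ S : Finset (Fin n), d < S.card → c S = 0) ∧
      expect n (fun x => |f x - ∑ S : Finset (Fin n), c S * parity n S x|) ≤ ε ∧
      (∑ S : Finset (Fin n), |c S|) ≤ (1 + a / α) ^ d := by
  obtain ⟨hε0, hε1⟩ := hε
  have hf1 : ∀ x, |f x| ≤ 1 := fun x => abs_le.2 ⟨by linarith [(hf01 x).1], (hf01 x).2⟩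
  have hβ : ∑ i, l1Influence f i ≤ a := (sum_l1Influence_le hf).trans <| mul_le_of_le_one_right
    (by linarith) (Finset.expect_le Finset.univ_nonempty fun x _ => (hf01 x).2)
  set δ := ε / (4 * a) with hδdef
  have hδ0 : 0 < δ := by positivity
  have hρ : 1 - δ ∈ Set.Icc 0 1 :=
    ⟨by rw [hδdef, sub_nonneg, div_le_one (by positivity)]; linarith, by linarith⟩
  have hlog : 0 < Real.log (6 / ε) := Real.log_pos (by rw [lt_div_iff₀ hε0]; linarith)
  have hd1 : 1 ≤ d := hd ▸ Nat.ceil_pos.2 (mul_pos (by positivity) hlog)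
  refine ⟨approxCoeff f (1 - δ) d α, fun S hS => if_neg fun h => by omega, ?_, ?_⟩
  · have hnoise : (1 - (1 - δ)) * ∑ i, l1Influence f i ≤ ε / 4 := calc
      _ ≤ δ * a := by rw [sub_sub_cancel]; gcongr
      _ = ε / 4 := by rw [hδdef]; field_simp
    have hhigh : (1 - δ) ^ d ≤ ε / 6 := one_sub_pow_le_of_log_inv_le hρ.1 (by positivity) <| calc
      Real.log (ε / 6)⁻¹ = 4 * a / ε * Real.log (6 / ε) * δ := by rw [inv_div, hδdef]; field_simp
      _ ≤ d * δ := by gcongr; exact hd ▸ Nat.le_ceil _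
    have hlow := hα ▸ sqrt_sqrt_nine_pow_pred_mul_le (by linarith) hε0 hd1 hβ
    rw [expect_eq_finsetExpect]
    refine (expect_abs_sub_fourierSum_approxCoeff_le hf1 hρ d α).trans ?_
    linarith
  · have hα0 : 0 < α := by rw [hα]; positivity
    have hβ0 : 0 ≤ ∑ i, l1Influence f i := Finset.sum_nonneg fun i _ => l1Influence_nonneg f i
    refine (sum_abs_approxCoeff_le hf1 hρ hα0 d).trans ?_
    gcongr

theorem selfbounding_low_spectral_norm_approx (n : ℕ) (a : ℝ) (ha : 1 ≤ a)
    (hn : 4 * a ≤ (n : ℝ))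
    (f : (Fin n → Bool) → ℝ) (hf01 : ∀ x, f x ∈ Set.Icc (0 : ℝ) 1) (hf : SelfBounding n a f)
    (ε : ℝ) (hε : ε ∈ Set.Ioc (0 : ℝ) 1)
    (d : ℕ) (hd : d = ⌈(4 * a / ε) * Real.log (6 / ε)⌉₊)
    (α : ℝ) (hα : α = (3 : ℝ) ^ (-(2 * (d : ℝ)) - 1) * ε ^ 4 / a ^ 2) :
    ∃ c : Finset (Fin n) → ℝ,
      (∀ S : Finset (Fin n), d < S.card → c S = 0) ∧
      expect n (fun x => |f x - ∑ S : Finset (Fin n), c S * parity n S x|) ≤ ε ∧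
      (∑ S : Finset (Fin n), |c S|) ≤ (1 + a / α) ^ d :=
  selfbounding_low_spectral_norm_approx_general n a ha f hf01 hf ε hε d hd α hα
end
end
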